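/- arXiv:2412.15877 — 7 statements merged into one kernel-verified Lean document; each statement's English description precedes it below -/
import Mathlib

section
/- Suppose the aggregation map φ satisfies the Boltzmann-similarity condition: φ(s1) = φ(s2) implies, for all a ∈ A1×A2, |e^{Q*(s1,a)}/Σ_{b∈A1×A2} e^{Q*(s1,b)} − e^{Q*(s2,a)}/Σ_{b} e^{Q*(s2,b)}| ≤ ε and |Σ_{b} e^{Q*(s1,b)} − Σ_{b} e^{Q*(s2,b)}| ≤ k·ε, for some ε ≥ 0 and k ≥ 0. Then the ground policy profile π_GA* induced by a Nash equilibrium π_A* of the abstract game satisfies GAP(π_GA*) ≤ 12·e^{2/(1−γ)}·(|A1||A2| + k·e^{1/(1−γ)}/(|A1||A2|))·ε/(1−γ)³. -/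
open Finset

/-- A mixed Markov policy: a probability distribution over actions at each state. -/
def IsPolicy {S A : Type*} [Fintype A] (π : S → A → ℝ) : Prop :=
  (∀ s a, 0 ≤ π s a) ∧ ∀ s, ∑ a, π s a = 1

/-- A transition kernel: a probability distribution over next states for every
state and joint action. -/
def IsKernel {S A1 A2 : Type*} [Fintype S] (P : S → A1 → A2 → S → ℝ) : Prop :=
  (∀ s a1 a2 s', 0 ≤ P s a1 a2 s') ∧ ∀ s a1 a2, ∑ s', P s a1 a2 s' = 1

/-- Rewards lie in `[0,1]`. -/
def IsReward {S A1 A2 : Type*} (R : S → A1 → A2 → ℝ) : Prop :=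
  ∀ s a1 a2, 0 ≤ R s a1 a2 ∧ R s a1 a2 ≤ 1

/-- The state-action value induced by a state value function `V`:
`Q(s,a) = R(s,a) + γ * Σ_{s'} P(s'|s,a) V(s')`. -/
def Qf {S A1 A2 : Type*} [Fintype S] (R : S → A1 → A2 → ℝ) (P : S → A1 → A2 → S → ℝ)
    (γ : ℝ) (V : S → ℝ) (s : S) (a1 : A1) (a2 : A2) : ℝ :=
  R s a1 a2 + γ * ∑ s', P s a1 a2 s' * V s'

/-- `V` satisfies the Bellman equation for the policy profile `(π1, π2)`. -/
def IsValue {S A1 A2 : Type*} [Fintype S] [Fintype A1] [Fintype A2]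
    (R : S → A1 → A2 → ℝ) (P : S → A1 → A2 → S → ℝ) (γ : ℝ)
    (π1 : S → A1 → ℝ) (π2 : S → A2 → ℝ) (V : S → ℝ) : Prop :=
  ∀ s, V s = ∑ a1, ∑ a2, π1 s a1 * π2 s a2 * Qf R P γ V s a1 a2

/-- `Val` assigns to every policy profile its value function. -/
def IsValueOperator {S A1 A2 : Type*} [Fintype S] [Fintype A1] [Fintype A2]
    (R : S → A1 → A2 → ℝ) (P : S → A1 → A2 → S → ℝ) (γ : ℝ)
    (Val : (S → A1 → ℝ) → (S → A2 → ℝ) → S → ℝ) : Prop :=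
  ∀ π1 π2, IsPolicy π1 → IsPolicy π2 → IsValue R P γ π1 π2 (Val π1 π2)

/-- `(π1, π2)` is a Nash equilibrium of the game whose values are given by `Val`:
for all states `s` and all policies `π1'`, `π2'`,
`Val π1 π2' s ≥ Val π1 π2 s ≥ Val π1' π2 s`. -/
def IsNash {S A1 A2 : Type*} [Fintype A1] [Fintype A2]
    (Val : (S → A1 → ℝ) → (S → A2 → ℝ) → S → ℝ)
    (π1 : S → A1 → ℝ) (π2 : S → A2 → ℝ) : Prop :=
  IsPolicy π1 ∧ IsPolicy π2 ∧
    ∀ s, ∀ π1' π2', IsPolicy π1' → IsPolicy π2' →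
      Val π1 π2' s ≥ Val π1 π2 s ∧ Val π1 π2 s ≥ Val π1' π2 s

/-- `π1d` is a best response for player 1 against the player-2 policy `π2`:
`Val π1d π2 s = max_{π1} Val π1 π2 s` for every state `s`. -/
def IsBestResponse1 {S A1 A2 : Type*} [Fintype A1]
    (Val : (S → A1 → ℝ) → (S → A2 → ℝ) → S → ℝ)
    (π1d : S → A1 → ℝ) (π2 : S → A2 → ℝ) : Prop :=
  IsPolicy π1d ∧ ∀ π1, IsPolicy π1 → ∀ s, Val π1 π2 s ≤ Val π1d π2 s

/-- A weight function for the aggregation map `φ`: weights lie in `[0,1]` and sum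
to one within each aggregated class. -/
def IsAggWeight {S SA : Type*} [Fintype S] [DecidableEq SA] (φ : S → SA) (w : S → ℝ) : Prop :=
  (∀ s, 0 ≤ w s ∧ w s ≤ 1) ∧ ∀ sA : SA, ∑ s ∈ univ.filter (fun s => φ s = sA), w s = 1

/-- The abstract transition kernel:
`P_A(s_A'|s_A,a) = Σ_{s : φ s = s_A} Σ_{s' : φ s' = s_A'} P(s'|s,a) w(s)`. -/
def PA {S SA A1 A2 : Type*} [Fintype S] [DecidableEq SA]
    (P : S → A1 → A2 → S → ℝ) (φ : S → SA) (w : S → ℝ)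
    (sA : SA) (a1 : A1) (a2 : A2) (sA' : SA) : ℝ :=
  ∑ s ∈ univ.filter (fun s => φ s = sA),
    ∑ s' ∈ univ.filter (fun s' => φ s' = sA'), P s a1 a2 s' * w s

/-- The abstract reward function:
`R_A(s_A,a) = Σ_{s : φ s = s_A} R(s,a) w(s)`. -/
def RA {S SA A1 A2 : Type*} [Fintype S] [DecidableEq SA]
    (R : S → A1 → A2 → ℝ) (φ : S → SA) (w : S → ℝ)
    (sA : SA) (a1 : A1) (a2 : A2) : ℝ :=
  ∑ s ∈ univ.filter (fun s => φ s = sA), R s a1 a2 * w s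

/-!
Write `Q*` for the ground Nash Q-function. Since `0 ≤ Q* ≤ 1/(1-γ)`, the partition functions
lie between `|A|` and `|A| e^{1/(1-γ)}`, and `|x - y| ≤ |e^x - e^y|` on `[0, ∞)`; so Boltzmann
similarity makes `Q*` vary by at most `δ = e^{1/(1-γ)} (|A| + k/|A|) ε` within an aggregation class.

At every state a Nash profile plays a saddle point of the one-step matrix game `Q*(s, ·)`, and
saddle values of two matrix games differ by at most the sup-distance of the matrices. The abstract
Q-function at `φ s` is a `w`-average of ground one-step values, hence within `δ + γ D` of `Q*(s, ·)`
whenever `D` bounds `|V_A*(φ s) - V*(s)|`; this yields `D ≤ δ + γ D`, i.e. `D ≤ δ / (1 - γ)`.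
Against any deviation the lifted abstract strategies therefore lose at most `2 D` per step relative
to `V*`, and a discounted comparison bounds the duality gap by `4 δ / (1 - γ)²`.
-/

lemma isPolicy_iff_forall_mem_stdSimplex {S A : Type*} [Fintype A] {π : S → A → ℝ} :
    IsPolicy π ↔ ∀ s, π s ∈ stdSimplex ℝ A :=
  ⟨fun h s => ⟨h.1 s, h.2 s⟩, fun h => ⟨fun s => (h s).1, fun s => (h s).2⟩⟩

lemma IsPolicy.mem_stdSimplex {S A : Type*} [Fintype A] {π : S → A → ℝ} (hπ : IsPolicy π)
    (s : S) : π s ∈ stdSimplex ℝ A :=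
  isPolicy_iff_forall_mem_stdSimplex.mp hπ s

lemma IsPolicy.update {S A : Type*} [Fintype A] [DecidableEq S] {π : S → A → ℝ}
    (hπ : IsPolicy π) (s : S) {p : A → ℝ} (hp : p ∈ stdSimplex ℝ A) :
    IsPolicy (Function.update π s p) := by
  rw [isPolicy_iff_forall_mem_stdSimplex] at hπ ⊢
  intro t
  rcases eq_or_ne t s with rfl | hts
  · simpa using hp
  · simpa [hts] using hπ t

lemma IsPolicy.comp {S S' A : Type*} [Fintype A] {π : S' → A → ℝ} (hπ : IsPolicy π)
    (φ : S → S') : IsPolicy (fun s => π (φ s)) :=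
  ⟨fun s => hπ.1 (φ s), fun s => hπ.2 (φ s)⟩

section MatrixGame

variable {A1 A2 : Type*} [Fintype A1] [Fintype A2]

def payoff (p1 : A1 → ℝ) (p2 : A2 → ℝ) (M : A1 → A2 → ℝ) : ℝ :=
  ∑ a1, ∑ a2, p1 a1 * p2 a2 * M a1 a2

variable {p1 μ : A1 → ℝ} {p2 ν : A2 → ℝ} {M N : A1 → A2 → ℝ} {v v' η : ℝ}

lemma payoff_const (h1 : p1 ∈ stdSimplex ℝ A1) (h2 : p2 ∈ stdSimplex ℝ A2) (c : ℝ) :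
    payoff p1 p2 (fun _ _ => c) = c := by
  simp [payoff, ← sum_mul, ← mul_sum, h1.2, h2.2]

lemma payoff_le_payoff_add (h1 : p1 ∈ stdSimplex ℝ A1) (h2 : p2 ∈ stdSimplex ℝ A2)
    (h : ∀ a1 a2, M a1 a2 ≤ N a1 a2 + η) : payoff p1 p2 M ≤ payoff p1 p2 N + η := by
  calc payoff p1 p2 M ≤ payoff p1 p2 (fun a1 a2 => N a1 a2 + η) :=
        sum_le_sum fun a1 _ => sum_le_sum fun a2 _ =>
          mul_le_mul_of_nonneg_left (h a1 a2) (mul_nonneg (h1.1 a1) (h2.1 a2))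
    _ = payoff p1 p2 N + payoff p1 p2 (fun _ _ => η) := by
        simp only [payoff, mul_add, sum_add_distrib]
    _ = payoff p1 p2 N + η := by rw [payoff_const h1 h2]

lemma payoff_le_of_forall_le (h1 : p1 ∈ stdSimplex ℝ A1) (h2 : p2 ∈ stdSimplex ℝ A2)
    (h : ∀ a1 a2, M a1 a2 ≤ η) : payoff p1 p2 M ≤ η := by
  simpa [payoff_const h1 h2] using
    payoff_le_payoff_add (N := fun _ _ => 0) h1 h2 fun a1 a2 => by simpa using h a1 a2

lemma le_payoff_of_forall_le (h1 : p1 ∈ stdSimplex ℝ A1) (h2 : p2 ∈ stdSimplex ℝ A2)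
    (h : ∀ a1 a2, η ≤ M a1 a2) : η ≤ payoff p1 p2 M := by
  simpa [payoff_const h1 h2] using
    payoff_le_payoff_add (M := fun _ _ => η) (η := 0) h1 h2 fun a1 a2 => by simpa using h a1 a2

def IsSaddlePoint (M : A1 → A2 → ℝ) (p1 : A1 → ℝ) (p2 : A2 → ℝ) (v : ℝ) : Prop :=
  (∀ μ ∈ stdSimplex ℝ A1, payoff μ p2 M ≤ v) ∧ ∀ ν ∈ stdSimplex ℝ A2, v ≤ payoff p1 ν M

lemma IsSaddlePoint.payoff_le_add (hN : IsSaddlePoint N p1 p2 v) (h2 : p2 ∈ stdSimplex ℝ A2)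
    (h : ∀ a1 a2, |N a1 a2 - M a1 a2| ≤ η) (hμ : μ ∈ stdSimplex ℝ A1) :
    payoff μ p2 M ≤ v + η := by
  have := payoff_le_payoff_add (M := M) (N := N) (η := η) hμ h2
    fun a1 a2 => by linarith [(abs_le.mp (h a1 a2)).1]
  linarith [hN.1 μ hμ]

lemma IsSaddlePoint.sub_le_payoff (hN : IsSaddlePoint N p1 p2 v) (h1 : p1 ∈ stdSimplex ℝ A1)
    (h : ∀ a1 a2, |N a1 a2 - M a1 a2| ≤ η) (hν : ν ∈ stdSimplex ℝ A2) :
    v - η ≤ payoff p1 ν M := by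
  have := payoff_le_payoff_add (M := N) (N := M) (η := η) h1 hν
    fun a1 a2 => by linarith [(abs_le.mp (h a1 a2)).2]
  linarith [hN.2 ν hν]

lemma IsSaddlePoint.abs_sub_le {q1 : A1 → ℝ} {q2 : A2 → ℝ}
    (hM : IsSaddlePoint M p1 p2 v) (hN : IsSaddlePoint N q1 q2 v')
    (hp1 : p1 ∈ stdSimplex ℝ A1) (hp2 : p2 ∈ stdSimplex ℝ A2)
    (hq1 : q1 ∈ stdSimplex ℝ A1) (hq2 : q2 ∈ stdSimplex ℝ A2)
    (h : ∀ a1 a2, |M a1 a2 - N a1 a2| ≤ η) : |v - v'| ≤ η := by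
  have h' a1 a2 : |N a1 a2 - M a1 a2| ≤ η := abs_sub_comm (M a1 a2) _ ▸ h a1 a2
  rw [abs_le]
  constructor
  · linarith [hN.sub_le_payoff hq1 h' hp2, hM.1 q1 hq1]
  · linarith [hM.2 q2 hq2, hN.payoff_le_add hq2 h' hp1]

end MatrixGame

section MarkovGame

variable {S A1 A2 : Type*} [Fintype S]
  {R : S → A1 → A2 → ℝ} {P : S → A1 → A2 → S → ℝ} {γ : ℝ}

/-- Applied to `N = max f`, the hypothesis gives `max f ≤ c + γ * max f`. -/
lemma le_div_one_sub_of_forall_le (hγ : γ < 1) (f : S → ℝ) {c : ℝ}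
    (h : ∀ N, (∀ t, f t ≤ N) → ∀ t, f t ≤ c + γ * N) (s : S) : f s ≤ c / (1 - γ) := by
  obtain ⟨t₀, -, ht₀⟩ := exists_max_image univ f ⟨s, mem_univ s⟩
  have hmax : ∀ t, f t ≤ f t₀ := fun t => ht₀ t (mem_univ t)
  have hγ' : 0 < 1 - γ := by linarith
  have := h _ hmax t₀
  exact (hmax s).trans (by rw [le_div_iff₀ hγ']; linarith)

lemma Qf_le_Qf_add (hP : IsKernel P) (hγ : 0 ≤ γ) {V W : S → ℝ} {N : ℝ}
    (h : ∀ t, V t ≤ W t + N) (s : S) (a1 : A1) (a2 : A2) :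
    Qf R P γ V s a1 a2 ≤ Qf R P γ W s a1 a2 + γ * N := by
  have hsum : ∑ t, P s a1 a2 t * V t ≤ ∑ t, P s a1 a2 t * W t + N := by
    calc ∑ t, P s a1 a2 t * V t ≤ ∑ t, P s a1 a2 t * (W t + N) :=
          sum_le_sum fun t _ => mul_le_mul_of_nonneg_left (h t) (hP.1 s a1 a2 t)
      _ = ∑ t, P s a1 a2 t * W t + N := by
          simp_rw [mul_add, sum_add_distrib, ← sum_mul, hP.2, one_mul]
  unfold Qf
  nlinarith

lemma abs_Qf_sub_Qf_le (hP : IsKernel P) (hγ : 0 ≤ γ) {V W : S → ℝ} {N : ℝ}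
    (h : ∀ t, |V t - W t| ≤ N) (s : S) (a1 : A1) (a2 : A2) :
    |Qf R P γ V s a1 a2 - Qf R P γ W s a1 a2| ≤ γ * N := by
  have hVW := Qf_le_Qf_add (R := R) (V := V) (W := W) (N := N) hP hγ
    (fun t => by linarith [(abs_le.mp (h t)).2]) s a1 a2
  have hWV := Qf_le_Qf_add (R := R) (V := W) (W := V) (N := N) hP hγ
    (fun t => by linarith [(abs_le.mp (h t)).1]) s a1 a2
  exact abs_le.mpr ⟨by linarith, by linarith⟩

lemma Qf_const (hP : IsKernel P) (c : ℝ) (s : S) (a1 : A1) (a2 : A2) :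
    Qf R P γ (fun _ => c) s a1 a2 = R s a1 a2 + γ * c := by
  rw [Qf, ← sum_mul, hP.2, one_mul]

lemma Qf_mem_Icc (hP : IsKernel P) (hR : IsReward R) (hγ0 : 0 ≤ γ) (hγ1 : γ < 1)
    {V : S → ℝ} (hV : ∀ t, V t ∈ Set.Icc 0 (1 / (1 - γ))) (s : S) (a1 : A1) (a2 : A2) :
    Qf R P γ V s a1 a2 ∈ Set.Icc 0 (1 / (1 - γ)) := by
  have hfix : 1 + γ * (1 / (1 - γ)) = 1 / (1 - γ) := by
    field_simp [(sub_pos.2 hγ1).ne']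
    ring
  have hlo := Qf_le_Qf_add (R := R) (V := fun _ => 0) (W := V) (N := 0) hP hγ0
    (fun t => by simpa using (hV t).1) s a1 a2
  have hhi := Qf_le_Qf_add (R := R) (V := V) (W := fun _ => 1 / (1 - γ)) (N := 0) hP hγ0
    (fun t => by simpa using (hV t).2) s a1 a2
  rw [Qf_const hP] at hlo hhi
  constructor <;> linarith [hR s a1 a2]

variable [Fintype A1] [Fintype A2] {π1 : S → A1 → ℝ} {π2 : S → A2 → ℝ} {V V' : S → ℝ} {c : ℝ}

lemma IsValue.eq_payoff (hV : IsValue R P γ π1 π2 V) (s : S) :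
    V s = payoff (π1 s) (π2 s) (Qf R P γ V s) :=
  hV s

lemma IsValue.le_add_of_payoff_le (hP : IsKernel P) (hγ0 : 0 ≤ γ) (hγ1 : γ < 1)
    (h1 : IsPolicy π1) (h2 : IsPolicy π2) (hV' : IsValue R P γ π1 π2 V')
    (h : ∀ s, payoff (π1 s) (π2 s) (Qf R P γ V s) ≤ V s + c) (s : S) :
    V' s ≤ V s + c / (1 - γ) := by
  suffices V' s - V s ≤ c / (1 - γ) by linarith
  refine le_div_one_sub_of_forall_le hγ1 (fun t => V' t - V t) (fun N hN t => ?_) s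
  have := payoff_le_payoff_add (h1.mem_stdSimplex t) (h2.mem_stdSimplex t)
    (Qf_le_Qf_add (R := R) (V := V') (W := V) (N := N) hP hγ0 (fun t => by linarith [hN t]) t)
  linarith [h t, hV'.eq_payoff t]

lemma IsValue.sub_le_of_le_payoff (hP : IsKernel P) (hγ0 : 0 ≤ γ) (hγ1 : γ < 1)
    (h1 : IsPolicy π1) (h2 : IsPolicy π2) (hV' : IsValue R P γ π1 π2 V')
    (h : ∀ s, V s - c ≤ payoff (π1 s) (π2 s) (Qf R P γ V s)) (s : S) :
    V s - c / (1 - γ) ≤ V' s := by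
  suffices V s - V' s ≤ c / (1 - γ) by linarith
  refine le_div_one_sub_of_forall_le hγ1 (fun t => V t - V' t) (fun N hN t => ?_) s
  have := payoff_le_payoff_add (h1.mem_stdSimplex t) (h2.mem_stdSimplex t)
    (Qf_le_Qf_add (R := R) (V := V) (W := V') (N := N) hP hγ0 (fun t => by linarith [hN t]) t)
  linarith [h t, hV'.eq_payoff t]

lemma IsValue.mem_Icc (hP : IsKernel P) (hR : IsReward R) (hγ0 : 0 ≤ γ) (hγ1 : γ < 1)
    (h1 : IsPolicy π1) (h2 : IsPolicy π2) (hV : IsValue R P γ π1 π2 V) (s : S) :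
    V s ∈ Set.Icc 0 (1 / (1 - γ)) := by
  have hL : (0 : ℝ) ≤ 1 / (1 - γ) := one_div_nonneg.2 (sub_pos.2 hγ1).le
  have hQ (c : ℝ) (hc : c ∈ Set.Icc 0 (1 / (1 - γ))) (t : S) :=
    Qf_mem_Icc (R := R) hP hR hγ0 hγ1 (fun _ => hc) t
  have hlo (t : S) : 0 ≤ payoff (π1 t) (π2 t) (Qf R P γ (fun _ => 0) t) :=
    le_payoff_of_forall_le (h1.mem_stdSimplex t) (h2.mem_stdSimplex t)
      fun a1 a2 => (hQ 0 ⟨le_rfl, hL⟩ t a1 a2).1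
  have hhi (t : S) : payoff (π1 t) (π2 t) (Qf R P γ (fun _ => 1 / (1 - γ)) t) ≤ 1 / (1 - γ) :=
    payoff_le_of_forall_le (h1.mem_stdSimplex t) (h2.mem_stdSimplex t)
      fun a1 a2 => (hQ _ ⟨hL, le_rfl⟩ t a1 a2).2
  constructor
  · simpa using hV.sub_le_of_le_payoff (V := fun _ => 0) (c := 0) hP hγ0 hγ1 h1 h2
      (fun t => by simpa using hlo t) s
  · simpa using hV.le_add_of_payoff_le (V := fun _ => 1 / (1 - γ)) (c := 0) hP hγ0 hγ1 h1 h2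
      (fun t => by simpa using hhi t) s

variable {Val : (S → A1 → ℝ) → (S → A2 → ℝ) → S → ℝ}

/-- A one-state deviation that gains in the one-step game loses nowhere by
`IsValue.sub_le_of_le_payoff`; the Nash property then forces equal values, contradicting the
gain. -/
lemma IsNash.isSaddlePoint (hP : IsKernel P) (hγ0 : 0 ≤ γ) (hγ1 : γ < 1)
    (hVal : IsValueOperator R P γ Val) (hN : IsNash Val π1 π2) (s : S) :
    IsSaddlePoint (Qf R P γ (Val π1 π2) s) (π1 s) (π2 s) (Val π1 π2 s) := by
  classical
  obtain ⟨h1, h2, hNE⟩ := hN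
  have hV := hVal π1 π2 h1 h2
  constructor
  · intro μ hμ
    by_contra! hlt
    have h1' := h1.update s hμ
    have hV' := hVal _ π2 h1' h2
    have hge (t : S) : Val π1 π2 t - 0 ≤
        payoff (Function.update π1 s μ t) (π2 t) (Qf R P γ (Val π1 π2) t) := by
      rcases eq_or_ne t s with rfl | hts
      · simpa using hlt.le
      · simpa [hts] using (hV.eq_payoff t).le
    have heq : Val (Function.update π1 s μ) π2 = Val π1 π2 := funext fun t =>
      le_antisymm (hNE t _ π2 h1' h2).2
        (by simpa using hV'.sub_le_of_le_payoff hP hγ0 hγ1 h1' h2 hge t)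
    have hVs : Val π1 π2 s = payoff μ (π2 s) (Qf R P γ (Val π1 π2) s) := by
      simpa [heq] using hV'.eq_payoff s
    exact hlt.ne hVs
  · intro ν hν
    by_contra! hlt
    have h2' := h2.update s hν
    have hV' := hVal π1 _ h1 h2'
    have hle (t : S) :
        payoff (π1 t) (Function.update π2 s ν t) (Qf R P γ (Val π1 π2) t) ≤ Val π1 π2 t + 0 := by
      rcases eq_or_ne t s with rfl | hts
      · simpa using hlt.le
      · simpa [hts] using (hV.eq_payoff t).ge
    have heq : Val π1 (Function.update π2 s ν) = Val π1 π2 := funext fun t =>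
      le_antisymm (by simpa using hV'.le_add_of_payoff_le hP hγ0 hγ1 h1 h2' hle t)
        (hNE t π1 _ h1 h2').1
    have hVs : Val π1 π2 s = payoff (π1 s) ν (Qf R P γ (Val π1 π2) s) := by
      simpa [heq] using hV'.eq_payoff s
    exact hlt.ne' hVs

end MarkovGame

section Aggregation

variable {S SA A1 A2 : Type*} [Fintype S] [Fintype SA] [DecidableEq SA]
  {R : S → A1 → A2 → ℝ} {P : S → A1 → A2 → S → ℝ} {γ : ℝ} {φ : S → SA} {w : S → ℝ}

lemma sum_PA_mul (U : SA → ℝ) (sA : SA) (a1 : A1) (a2 : A2) :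
    ∑ sA', PA P φ w sA a1 a2 sA' * U sA' =
      ∑ g ∈ univ.filter (fun s => φ s = sA), w g * ∑ t, P g a1 a2 t * U (φ t) := by
  simp_rw [PA, sum_mul]
  rw [sum_comm]
  refine sum_congr rfl fun g _ => ?_
  rw [mul_sum, ← sum_fiberwise univ φ]
  refine sum_congr rfl fun sA' _ => sum_congr rfl fun t ht => ?_
  rw [(mem_filter.mp ht).2]
  ring

lemma Qf_RA_PA (U : SA → ℝ) (sA : SA) (a1 : A1) (a2 : A2) :
    Qf (RA R φ w) (PA P φ w) γ U sA a1 a2 =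
      ∑ g ∈ univ.filter (fun s => φ s = sA), w g * Qf R P γ (fun s => U (φ s)) g a1 a2 := by
  simp only [Qf, RA, sum_PA_mul, mul_add, sum_add_distrib, mul_sum]
  congr 1 <;> refine sum_congr rfl fun g _ => ?_
  · ring
  · exact sum_congr rfl fun t _ => by ring

lemma isKernel_PA (hP : IsKernel P) (hw : IsAggWeight φ w) : IsKernel (PA P φ w) := by
  refine ⟨fun sA a1 a2 sA' => sum_nonneg fun g _ => sum_nonneg fun t _ =>
    mul_nonneg (hP.1 g a1 a2 t) (hw.1 g).1, fun sA a1 a2 => ?_⟩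
  simpa [hP.2, hw.2] using sum_PA_mul (P := P) (φ := φ) (w := w) (fun _ => 1) sA a1 a2

lemma abs_Qf_RA_PA_sub_Qf_le (hP : IsKernel P) (hγ : 0 ≤ γ) (hw : IsAggWeight φ w)
    {U : SA → ℝ} {V : S → ℝ} {D δ : ℝ} (hUV : ∀ t, |U (φ t) - V t| ≤ D)
    (t : S) (a1 : A1) (a2 : A2)
    (hvar : ∀ g, φ g = φ t → |Qf R P γ V g a1 a2 - Qf R P γ V t a1 a2| ≤ δ) :
    |Qf (RA R φ w) (PA P φ w) γ U (φ t) a1 a2 - Qf R P γ V t a1 a2| ≤ δ + γ * D := by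
  set F := univ.filter (fun s => φ s = φ t)
  have hterm (g : S) (hg : g ∈ F) :
      |w g * (Qf R P γ (fun s => U (φ s)) g a1 a2 - Qf R P γ V t a1 a2)| ≤ w g * (δ + γ * D) := by
    rw [abs_mul, abs_of_nonneg (hw.1 g).1]
    refine mul_le_mul_of_nonneg_left ?_ (hw.1 g).1
    have := abs_Qf_sub_Qf_le (R := R) hP hγ hUV g a1 a2
    have := hvar g (mem_filter.mp hg).2
    linarith [abs_sub_le (Qf R P γ (fun s => U (φ s)) g a1 a2) (Qf R P γ V g a1 a2)
      (Qf R P γ V t a1 a2)]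
  calc |Qf (RA R φ w) (PA P φ w) γ U (φ t) a1 a2 - Qf R P γ V t a1 a2|
      = |∑ g ∈ F, w g * (Qf R P γ (fun s => U (φ s)) g a1 a2 - Qf R P γ V t a1 a2)| := by
        simp_rw [Qf_RA_PA, mul_sub, sum_sub_distrib, ← sum_mul, F, hw.2, one_mul]
    _ ≤ ∑ g ∈ F, w g * (δ + γ * D) := (abs_sum_le_sum_abs _ _).trans (sum_le_sum hterm)
    _ = δ + γ * D := by rw [← sum_mul, hw.2, one_mul]

end Aggregation

section Boltzmann

open Real

lemma sub_le_exp_sub_exp {x y : ℝ} (hy : 0 ≤ y) (hyx : y ≤ x) : x - y ≤ exp x - exp y := by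
  have hexp : exp x = exp y * exp (x - y) := by rw [← exp_add, add_sub_cancel]
  nlinarith [add_one_le_exp (x - y), one_le_exp hy]

lemma abs_sub_le_abs_exp_sub_exp {x y : ℝ} (hx : 0 ≤ x) (hy : 0 ≤ y) :
    |x - y| ≤ |exp x - exp y| := by
  rcases le_total y x with hyx | hxy
  · rw [abs_of_nonneg (sub_nonneg.2 hyx)]
    exact (sub_le_exp_sub_exp hy hyx).trans (le_abs_self _)
  · rw [abs_sub_comm, abs_sub_comm (exp x), abs_of_nonneg (sub_nonneg.2 hxy)]
    exact (sub_le_exp_sub_exp hx hxy).trans (le_abs_self _)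

variable {A1 A2 : Type*} [Fintype A1] [Fintype A2]

lemma sum_exp_mem_Icc {q : A1 → A2 → ℝ} {L : ℝ} (hq : ∀ a1 a2, q a1 a2 ∈ Set.Icc 0 L) :
    ∑ b1, ∑ b2, exp (q b1 b2) ∈
      Set.Icc ((Fintype.card A1 : ℝ) * Fintype.card A2)
        (Fintype.card A1 * Fintype.card A2 * exp L) := by
  have hcard (c : ℝ) : ∑ _b1 : A1, ∑ _b2 : A2, c = Fintype.card A1 * Fintype.card A2 * c := by
    simp [mul_assoc]
  constructor
  · simpa [hcard] using sum_le_sum fun b1 (_ : b1 ∈ univ) => sum_le_sum fun b2 (_ : b2 ∈ univ) =>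
      one_le_exp (hq b1 b2).1
  · rw [← hcard]
    exact sum_le_sum fun b1 _ => sum_le_sum fun b2 _ => exp_le_exp.2 (hq b1 b2).2

variable [Nonempty A1] [Nonempty A2]

lemma abs_sub_le_of_boltzmann_close {q q' : A1 → A2 → ℝ} {L ε k : ℝ}
    (hq : ∀ a1 a2, q a1 a2 ∈ Set.Icc 0 L) (hq' : ∀ a1 a2, q' a1 a2 ∈ Set.Icc 0 L)
    (hsoft : ∀ a1 a2, |exp (q a1 a2) / (∑ b1, ∑ b2, exp (q b1 b2))
      - exp (q' a1 a2) / (∑ b1, ∑ b2, exp (q' b1 b2))| ≤ ε)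
    (hZ : |(∑ b1, ∑ b2, exp (q b1 b2)) - (∑ b1, ∑ b2, exp (q' b1 b2))| ≤ k * ε)
    (a1 : A1) (a2 : A2) :
    |q a1 a2 - q' a1 a2| ≤
      exp L * ((Fintype.card A1 : ℝ) * Fintype.card A2
        + k / ((Fintype.card A1 : ℝ) * Fintype.card A2)) * ε := by
  set n : ℝ := (Fintype.card A1 : ℝ) * Fintype.card A2
  set Z := ∑ b1, ∑ b2, exp (q b1 b2)
  set Z' := ∑ b1, ∑ b2, exp (q' b1 b2)
  set e := exp (q a1 a2)
  set e' := exp (q' a1 a2)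
  have hn : 0 < n := by positivity
  have hZ_mem : Z ∈ Set.Icc n (n * exp L) := sum_exp_mem_Icc hq
  have hZ' : n ≤ Z' := (sum_exp_mem_Icc hq').1
  have hZpos : 0 < Z := hn.trans_le hZ_mem.1
  have hZ'pos : 0 < Z' := hn.trans_le hZ'
  have hε : 0 ≤ ε := (abs_nonneg _).trans (hsoft a1 a2)
  have he' : e' / Z' ≤ exp L / n :=
    div_le_div₀ (exp_nonneg _) (exp_le_exp.2 (hq' a1 a2).2) hn hZ'
  have hsplit : e - e' = (e / Z - e' / Z') * Z + e' / Z' * (Z - Z') := by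
    field_simp
    ring
  have hexp : |e - e'| ≤ ε * (n * exp L) + exp L / n * (k * ε) := by
    rw [hsplit]
    refine (abs_add_le _ _).trans (add_le_add ?_ ?_)
    · rw [abs_mul, abs_of_pos hZpos]
      exact mul_le_mul (hsoft a1 a2) hZ_mem.2 hZpos.le hε
    · rw [abs_mul, abs_of_nonneg (by positivity)]
      exact mul_le_mul he' hZ (abs_nonneg _) (by positivity)
  calc |q a1 a2 - q' a1 a2| ≤ |e - e'| := abs_sub_le_abs_exp_sub_exp (hq a1 a2).1 (hq' a1 a2).1
    _ ≤ ε * (n * exp L) + exp L / n * (k * ε) := hexp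
    _ = exp L * (n + k / n) * ε := by ring

end Boltzmann

section AbstractNash

variable {S SA A1 A2 : Type*} [Fintype S] [Fintype SA] [DecidableEq SA] [Fintype A1] [Fintype A2]
  {R : S → A1 → A2 → ℝ} {P : S → A1 → A2 → S → ℝ} {γ : ℝ} {φ : S → SA} {w : S → ℝ}
  {Val : (S → A1 → ℝ) → (S → A2 → ℝ) → S → ℝ} {ValA : (SA → A1 → ℝ) → (SA → A2 → ℝ) → SA → ℝ}
  {π1s : S → A1 → ℝ} {π2s : S → A2 → ℝ} {πA1 : SA → A1 → ℝ} {πA2 : SA → A2 → ℝ} {δ : ℝ}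

lemma abs_abstract_value_sub_le (hP : IsKernel P) (hγ0 : 0 ≤ γ) (hγ1 : γ < 1)
    (hw : IsAggWeight φ w) (hVal : IsValueOperator R P γ Val)
    (hValA : IsValueOperator (RA R φ w) (PA P φ w) γ ValA)
    (hNash : IsNash Val π1s π2s) (hNashA : IsNash ValA πA1 πA2)
    (hvar : ∀ t₁ t₂, φ t₁ = φ t₂ → ∀ a1 a2,
      |Qf R P γ (Val π1s π2s) t₁ a1 a2 - Qf R P γ (Val π1s π2s) t₂ a1 a2| ≤ δ) (t : S) :
    |ValA πA1 πA2 (φ t) - Val π1s π2s t| ≤ δ / (1 - γ) :=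
  le_div_one_sub_of_forall_le hγ1 (fun t => |ValA πA1 πA2 (φ t) - Val π1s π2s t|)
    (fun _ hN t => (hNashA.isSaddlePoint (isKernel_PA hP hw) hγ0 hγ1 hValA (φ t)).abs_sub_le
      (hNash.isSaddlePoint hP hγ0 hγ1 hVal t) (hNashA.1.mem_stdSimplex _)
      (hNashA.2.1.mem_stdSimplex _) (hNash.1.mem_stdSimplex t) (hNash.2.1.mem_stdSimplex t)
      fun a1 a2 => abs_Qf_RA_PA_sub_Qf_le hP hγ0 hw hN t a1 a2 fun g hg => hvar g t hg a1 a2) t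

/-- Per step the lifted strategies lose at most `δ + γ D + D = 2 D`, where `D = δ / (1 - γ)`
bounds the abstract-ground value gap. -/
lemma lifted_duality_gap_le (hP : IsKernel P) (hγ0 : 0 ≤ γ) (hγ1 : γ < 1)
    (hw : IsAggWeight φ w) (hVal : IsValueOperator R P γ Val)
    (hValA : IsValueOperator (RA R φ w) (PA P φ w) γ ValA)
    (hNash : IsNash Val π1s π2s) (hNashA : IsNash ValA πA1 πA2)
    (hvar : ∀ t₁ t₂, φ t₁ = φ t₂ → ∀ a1 a2,
      |Qf R P γ (Val π1s π2s) t₁ a1 a2 - Qf R P γ (Val π1s π2s) t₂ a1 a2| ≤ δ)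
    {π1' : S → A1 → ℝ} {π2' : S → A2 → ℝ} (hπ1' : IsPolicy π1') (hπ2' : IsPolicy π2') (s : S) :
    Val π1' (fun s => πA2 (φ s)) s - Val (fun s => πA1 (φ s)) π2' s ≤ 4 * δ / (1 - γ) ^ 2 := by
  set D := δ / (1 - γ)
  have hγ' : 0 < 1 - γ := sub_pos.2 hγ1
  have hD := abs_abstract_value_sub_le hP hγ0 hγ1 hw hVal hValA hNash hNashA hvar
  have hclose t a1 a2 : |Qf (RA R φ w) (PA P φ w) γ (ValA πA1 πA2) (φ t) a1 a2
      - Qf R P γ (Val π1s π2s) t a1 a2| ≤ δ + γ * D :=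
    abs_Qf_RA_PA_sub_Qf_le hP hγ0 hw hD t a1 a2 fun g hg => hvar g t hg a1 a2
  have hSA t := hNashA.isSaddlePoint (isKernel_PA hP hw) hγ0 hγ1 hValA (φ t)
  have hstep : δ + γ * D + D = 2 * D := by
    have : δ = (1 - γ) * D := by rw [mul_div_cancel₀ _ hγ'.ne']
    linarith
  have hπA1 := hNashA.1.comp φ
  have hπA2 := hNashA.2.1.comp φ
  have hup := (hVal _ _ hπ1' hπA2).le_add_of_payoff_le hP hγ0 hγ1 hπ1' hπA2
    (V := Val π1s π2s) (c := 2 * D) (fun t => by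
      have := (hSA t).payoff_le_add (hπA2.mem_stdSimplex t) (hclose t) (hπ1'.mem_stdSimplex t)
      linarith [(abs_le.mp (hD t)).2]) s
  have hlo := (hVal _ _ hπA1 hπ2').sub_le_of_le_payoff hP hγ0 hγ1 hπA1 hπ2'
    (V := Val π1s π2s) (c := 2 * D) (fun t => by
      have := (hSA t).sub_le_payoff (hπA1.mem_stdSimplex t) (hclose t) (hπ2'.mem_stdSimplex t)
      linarith [(abs_le.mp (hD t)).1]) s
  have : 4 * δ / (1 - γ) ^ 2 = 2 * (2 * D / (1 - γ)) := by
    simp only [D]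
    field_simp
    ring
  linarith

end AbstractNash

lemma four_mul_div_sq_le {γ n k ε : ℝ} (hγ0 : 0 ≤ γ) (hγ1 : γ < 1) (hn : 0 < n)
    (hk : 0 ≤ k) (hε : 0 ≤ ε) :
    4 * (Real.exp (1 / (1 - γ)) * (n + k / n) * ε) / (1 - γ) ^ 2 ≤
      12 * Real.exp (2 / (1 - γ)) * (n + k * Real.exp (1 / (1 - γ)) / n) * ε / (1 - γ) ^ 3 := by
  have hγ' : 0 < 1 - γ := sub_pos.2 hγ1
  have hL : 0 ≤ 1 / (1 - γ) := by positivity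
  have hexp : Real.exp (1 / (1 - γ)) ≤ Real.exp (2 / (1 - γ)) :=
    Real.exp_le_exp.2 (div_le_div_of_nonneg_right (by norm_num) hγ'.le)
  have hk' : k / n ≤ k * Real.exp (1 / (1 - γ)) / n :=
    div_le_div_of_nonneg_right (le_mul_of_one_le_right hk (Real.one_le_exp hL)) hn.le
  have hpow : (1 - γ) ^ 3 ≤ (1 - γ) ^ 2 := pow_le_pow_of_le_one hγ'.le (by linarith) (by norm_num)
  calc 4 * (Real.exp (1 / (1 - γ)) * (n + k / n) * ε) / (1 - γ) ^ 2
      ≤ 12 * Real.exp (2 / (1 - γ)) * (n + k * Real.exp (1 / (1 - γ)) / n) * ε / (1 - γ) ^ 2 := by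
        gcongr ?_ / _
        rw [← mul_assoc, ← mul_assoc]
        gcongr
        norm_num
    _ ≤ _ := div_le_div_of_nonneg_left (by positivity) (by positivity) hpow

theorem duality_gap_bound_boltzmann_similarity_general
    {S SA A1 A2 : Type*}
    [Fintype S] [Fintype SA] [DecidableEq SA]
    [Fintype A1] [Nonempty A1] [Fintype A2] [Nonempty A2]
    (P : S → A1 → A2 → S → ℝ) (R : S → A1 → A2 → ℝ) (γ : ℝ)
    (hP : IsKernel P) (hR : IsReward R) (hγ0 : 0 ≤ γ) (hγ1 : γ < 1)
    (Val : (S → A1 → ℝ) → (S → A2 → ℝ) → S → ℝ)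
    (hVal : IsValueOperator R P γ Val)
    (φ : S → SA)
    (w : S → ℝ) (hw : IsAggWeight φ w)
    (ValA : (SA → A1 → ℝ) → (SA → A2 → ℝ) → SA → ℝ)
    (hValA : IsValueOperator (RA R φ w) (PA P φ w) γ ValA)
    (πA1 : SA → A1 → ℝ) (πA2 : SA → A2 → ℝ)
    (hNashA : IsNash ValA πA1 πA2)
    (π1s : S → A1 → ℝ) (π2s : S → A2 → ℝ)
    (hNash : IsNash Val π1s π2s)
    (ε k : ℝ) (hε : 0 ≤ ε) (hk : 0 ≤ k)
    (hagg : ∀ s1 s2 : S, φ s1 = φ s2 →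
      (∀ (a1 : A1) (a2 : A2),
        |Real.exp (Qf R P γ (Val π1s π2s) s1 a1 a2) / (∑ b1, ∑ b2, Real.exp (Qf R P γ (Val π1s π2s) s1 b1 b2))
          - Real.exp (Qf R P γ (Val π1s π2s) s2 a1 a2) / (∑ b1, ∑ b2, Real.exp (Qf R P γ (Val π1s π2s) s2 b1 b2))| ≤ ε) ∧
      |(∑ b1, ∑ b2, Real.exp (Qf R P γ (Val π1s π2s) s1 b1 b2))
        - (∑ b1, ∑ b2, Real.exp (Qf R P γ (Val π1s π2s) s2 b1 b2))| ≤ k * ε) :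
    ∀ s : S, ∀ (π1' : S → A1 → ℝ) (π2' : S → A2 → ℝ), IsPolicy π1' → IsPolicy π2' →
      Val π1' (fun s => πA2 (φ s)) s - Val (fun s => πA1 (φ s)) π2' s
        ≤ 12 * Real.exp (2 / (1 - γ)) *
            ((Fintype.card A1 : ℝ) * (Fintype.card A2 : ℝ)
              + k * Real.exp (1 / (1 - γ)) / ((Fintype.card A1 : ℝ) * (Fintype.card A2 : ℝ)))
            * ε / (1 - γ) ^ 3 := by
  intro s π1' π2' hπ1' hπ2'
  have hQ t a1 a2 := Qf_mem_Icc hP hR hγ0 hγ1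
    ((hVal _ _ hNash.1 hNash.2.1).mem_Icc hP hR hγ0 hγ1 hNash.1 hNash.2.1) t a1 a2
  have hvar t₁ t₂ (h : φ t₁ = φ t₂) a1 a2 :=
    abs_sub_le_of_boltzmann_close (hQ t₁) (hQ t₂) (hagg t₁ t₂ h).1 (hagg t₁ t₂ h).2 a1 a2
  calc Val π1' (fun s => πA2 (φ s)) s - Val (fun s => πA1 (φ s)) π2' s
      ≤ 4 * (Real.exp (1 / (1 - γ)) * ((Fintype.card A1 : ℝ) * Fintype.card A2
          + k / ((Fintype.card A1 : ℝ) * Fintype.card A2)) * ε) / (1 - γ) ^ 2 :=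
        lifted_duality_gap_le hP hγ0 hγ1 hw hVal hValA hNash hNashA hvar hπ1' hπ2' s
    _ ≤ _ := four_mul_div_sq_le hγ0 hγ1 (by positivity) hk hε

theorem duality_gap_bound_boltzmann_similarity
    {S SA A1 A2 : Type*}
    [Fintype S] [Nonempty S] [Fintype SA] [DecidableEq SA]
    [Fintype A1] [Nonempty A1] [Fintype A2] [Nonempty A2]
    (P : S → A1 → A2 → S → ℝ) (R : S → A1 → A2 → ℝ) (γ : ℝ)
    (hP : IsKernel P) (hR : IsReward R) (hγ0 : 0 ≤ γ) (hγ1 : γ < 1)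
    (Val : (S → A1 → ℝ) → (S → A2 → ℝ) → S → ℝ)
    (hVal : IsValueOperator R P γ Val)
    (φ : S → SA) (hφ : Function.Surjective φ)
    (w : S → ℝ) (hw : IsAggWeight φ w)
    (ValA : (SA → A1 → ℝ) → (SA → A2 → ℝ) → SA → ℝ)
    (hValA : IsValueOperator (RA R φ w) (PA P φ w) γ ValA)
    (πA1 : SA → A1 → ℝ) (πA2 : SA → A2 → ℝ)
    (hNashA : IsNash ValA πA1 πA2)
    (π1s : S → A1 → ℝ) (π2s : S → A2 → ℝ)
    (hNash : IsNash Val π1s π2s)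
    (ε k : ℝ) (hε : 0 ≤ ε) (hk : 0 ≤ k)
    (hagg : ∀ s1 s2 : S, φ s1 = φ s2 →
      (∀ (a1 : A1) (a2 : A2),
        |Real.exp (Qf R P γ (Val π1s π2s) s1 a1 a2) / (∑ b1, ∑ b2, Real.exp (Qf R P γ (Val π1s π2s) s1 b1 b2))
          - Real.exp (Qf R P γ (Val π1s π2s) s2 a1 a2) / (∑ b1, ∑ b2, Real.exp (Qf R P γ (Val π1s π2s) s2 b1 b2))| ≤ ε) ∧
      |(∑ b1, ∑ b2, Real.exp (Qf R P γ (Val π1s π2s) s1 b1 b2))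
        - (∑ b1, ∑ b2, Real.exp (Qf R P γ (Val π1s π2s) s2 b1 b2))| ≤ k * ε) :
    ∀ s : S, ∀ (π1' : S → A1 → ℝ) (π2' : S → A2 → ℝ), IsPolicy π1' → IsPolicy π2' →
      Val π1' (fun s => πA2 (φ s)) s - Val (fun s => πA1 (φ s)) π2' s
        ≤ 12 * Real.exp (2 / (1 - γ)) *
            ((Fintype.card A1 : ℝ) * (Fintype.card A2 : ℝ)
              + k * Real.exp (1 / (1 - γ)) / ((Fintype.card A1 : ℝ) * (Fintype.card A2 : ℝ)))
            * ε / (1 - γ) ^ 3 :=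
  duality_gap_bound_boltzmann_similarity_general P R γ hP hR hγ0 hγ1 Val hVal φ w hw ValA hValA πA1
    πA2 hNashA π1s π2s hNash ε k hε hk hagg
end

section
/- Suppose the aggregation map φ satisfies the multinomial-similarity condition: φ(s1) = φ(s2) implies, for all a ∈ A1×A2, |Q*(s1,a)/Σ_{b∈A1×A2} Q*(s1,b) − Q*(s2,a)/Σ_{b} Q*(s2,b)| ≤ ε and |Σ_{b} Q*(s1,b) − Σ_{b} Q*(s2,b)| ≤ k·ε, for some ε ≥ 0 and k ≥ 0. If moreover there exists δ > 0 such that |Σ_{b∈A1×A2} Q*(s,b)| ≥ δ for every s ∈ S, then the ground policy profile π_GA* induced by a Nash equilibrium π_A* of the abstract game satisfies GAP(π_GA*) ≤ 12·(|A1||A2| + k/δ)·ε/(1−γ)⁴. -/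
open Finset

set_option linter.unusedSectionVars false
set_option linter.unusedVariables false
set_option maxHeartbeats 1000000

/-- A distribution on a fintype. -/
def IsDist {A : Type*} [Fintype A] (x : A → ℝ) : Prop :=
  (∀ a, 0 ≤ x a) ∧ ∑ a, x a = 1

section Aux

variable {S A1 A2 : Type*} [Fintype S] [Nonempty S] [Fintype A1] [Nonempty A1]
  [Fintype A2] [Nonempty A2]

/-- convex combination upper bound -/
lemma sum_mul_le_of_le {ι : Type*} [Fintype ι] (p f : ι → ℝ) (c : ℝ)
    (hp : ∀ i, 0 ≤ p i) (hps : ∑ i, p i = 1) (hf : ∀ i, f i ≤ c) :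
    ∑ i, p i * f i ≤ c := by
  calc ∑ i, p i * f i ≤ ∑ i, p i * c := by
        apply Finset.sum_le_sum
        intro i _
        exact mul_le_mul_of_nonneg_left (hf i) (hp i)
    _ = c := by rw [← Finset.sum_mul, hps, one_mul]

lemma le_sum_mul_of_le {ι : Type*} [Fintype ι] (p f : ι → ℝ) (c : ℝ)
    (hp : ∀ i, 0 ≤ p i) (hps : ∑ i, p i = 1) (hf : ∀ i, c ≤ f i) :
    c ≤ ∑ i, p i * f i := by
  have := sum_mul_le_of_le p (fun i => -f i) (-c) hp hps (fun i => neg_le_neg (hf i))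
  simp only [mul_neg, Finset.sum_neg_distrib, neg_le_neg_iff] at this
  linarith [this]

/-- double convex combination (policy product) upper bound -/
lemma dsum_mul_le_of_le (x : A1 → ℝ) (y : A2 → ℝ) (f : A1 → A2 → ℝ) (c : ℝ)
    (hx : IsDist x) (hy : IsDist y) (hf : ∀ a1 a2, f a1 a2 ≤ c) :
    ∑ a1, ∑ a2, x a1 * y a2 * f a1 a2 ≤ c := by
  have : ∀ a1, ∑ a2, y a2 * f a1 a2 ≤ c := fun a1 =>
    sum_mul_le_of_le y (f a1) c hy.1 hy.2 (hf a1)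
  calc ∑ a1, ∑ a2, x a1 * y a2 * f a1 a2
      = ∑ a1, x a1 * ∑ a2, y a2 * f a1 a2 := by
        apply Finset.sum_congr rfl; intro a1 _
        rw [Finset.mul_sum]; apply Finset.sum_congr rfl; intro a2 _; ring
    _ ≤ c := sum_mul_le_of_le x _ c hx.1 hx.2 this


lemma le_dsum_mul_of_le (x : A1 → ℝ) (y : A2 → ℝ) (f : A1 → A2 → ℝ) (c : ℝ)
    (hx : IsDist x) (hy : IsDist y) (hf : ∀ a1 a2, c ≤ f a1 a2) :
    c ≤ ∑ a1, ∑ a2, x a1 * y a2 * f a1 a2 := by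
  have : ∀ a1, c ≤ ∑ a2, y a2 * f a1 a2 := fun a1 =>
    le_sum_mul_of_le y (f a1) c hy.1 hy.2 (hf a1)
  calc c ≤ ∑ a1, x a1 * ∑ a2, y a2 * f a1 a2 := le_sum_mul_of_le x _ c hx.1 hx.2 this
    _ = ∑ a1, ∑ a2, x a1 * y a2 * f a1 a2 := by
        apply Finset.sum_congr rfl; intro a1 _
        rw [Finset.mul_sum]; apply Finset.sum_congr rfl; intro a2 _; ring

/-- key expansion of a Bellman value against a reference function -/
lemma value_expand (R : S → A1 → A2 → ℝ) (P : S → A1 → A2 → S → ℝ) (γ : ℝ)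
    (π1 : S → A1 → ℝ) (π2 : S → A2 → ℝ) (W Vs : S → ℝ)
    (hW : IsValue R P γ π1 π2 W) (t : S) :
    W t = (∑ a1, ∑ a2, π1 t a1 * π2 t a2 * Qf R P γ Vs t a1 a2)
      + γ * ∑ a1, ∑ a2, π1 t a1 * π2 t a2 * ∑ s', P t a1 a2 s' * (W s' - Vs s') := by
  have qsplit : ∀ a1 a2, Qf R P γ W t a1 a2
      = Qf R P γ Vs t a1 a2 + γ * ∑ s', P t a1 a2 s' * (W s' - Vs s') := by
    intro a1 a2
    simp only [Qf, mul_sub, Finset.sum_sub_distrib]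
    ring
  calc W t = ∑ a1, ∑ a2, π1 t a1 * π2 t a2 * Qf R P γ W t a1 a2 := hW t
    _ = ∑ a1, ∑ a2, (π1 t a1 * π2 t a2 * Qf R P γ Vs t a1 a2
          + γ * (π1 t a1 * π2 t a2 * ∑ s', P t a1 a2 s' * (W s' - Vs s'))) := by
        apply Finset.sum_congr rfl; intro a1 _
        apply Finset.sum_congr rfl; intro a2 _
        rw [qsplit]; ring
    _ = _ := by
        simp only [Finset.sum_add_distrib, ← Finset.mul_sum]

/-- values of policy profiles lie in [0, 1/(1-γ)] -/
lemma value_bounds (R : S → A1 → A2 → ℝ) (P : S → A1 → A2 → S → ℝ) (γ : ℝ)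
    (hP : IsKernel P) (hR : IsReward R) (hγ0 : 0 ≤ γ) (hγ1 : γ < 1)
    (π1 : S → A1 → ℝ) (π2 : S → A2 → ℝ) (hπ1 : IsPolicy π1) (hπ2 : IsPolicy π2)
    (V : S → ℝ) (hV : IsValue R P γ π1 π2 V) :
    ∀ s, 0 ≤ V s ∧ V s ≤ 1 / (1 - γ) := by
  have h1γ : 0 < 1 - γ := by linarith
  obtain ⟨tM, _, htM⟩ := Finset.exists_max_image univ V univ_nonempty
  obtain ⟨tm, _, htm⟩ := Finset.exists_min_image univ V univ_nonempty
  have hMle : V tM ≤ 1 / (1 - γ) := by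
    have hQ : ∀ a1 a2, Qf R P γ V tM a1 a2 ≤ 1 + γ * V tM := by
      intro a1 a2
      have : ∑ s', P tM a1 a2 s' * V s' ≤ V tM :=
        sum_mul_le_of_le _ _ _ (hP.1 tM a1 a2) (hP.2 tM a1 a2) (fun t => htM t (mem_univ t))
      have hr := (hR tM a1 a2).2
      simp only [Qf]
      nlinarith
    have := dsum_mul_le_of_le (π1 tM) (π2 tM) _ _ ⟨hπ1.1 tM, hπ1.2 tM⟩ ⟨hπ2.1 tM, hπ2.2 tM⟩ hQ
    rw [← hV tM] at this
    rw [le_div_iff₀ h1γ]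
    nlinarith
  have hmge : 0 ≤ V tm := by
    have hQ : ∀ a1 a2, γ * V tm ≤ Qf R P γ V tm a1 a2 := by
      intro a1 a2
      have : V tm ≤ ∑ s', P tm a1 a2 s' * V s' :=
        le_sum_mul_of_le _ _ _ (hP.1 tm a1 a2) (hP.2 tm a1 a2) (fun t => htm t (mem_univ t))
      have hr := (hR tm a1 a2).1
      simp only [Qf]
      nlinarith
    have := le_dsum_mul_of_le (π1 tm) (π2 tm) _ _ ⟨hπ1.1 tm, hπ1.2 tm⟩ ⟨hπ2.1 tm, hπ2.2 tm⟩ hQ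
    rw [← hV tm] at this
    nlinarith
  intro s
  exact ⟨le_trans hmge (htm s (mem_univ s)), le_trans (htM s (mem_univ s)) hMle⟩


/-- At each state, the Nash policy of player 2 cannot be exploited beyond the value. -/
lemma nash_matrix1 (R : S → A1 → A2 → ℝ) (P : S → A1 → A2 → S → ℝ) (γ : ℝ)
    (hP : IsKernel P) (hγ0 : 0 ≤ γ) (hγ1 : γ < 1)
    (Val : (S → A1 → ℝ) → (S → A2 → ℝ) → S → ℝ) (hVal : IsValueOperator R P γ Val)
    (π1 : S → A1 → ℝ) (π2 : S → A2 → ℝ) (hN : IsNash Val π1 π2)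
    (s0 : S) (x : A1 → ℝ) (hx : IsDist x) :
    ∑ a1, ∑ a2, x a1 * π2 s0 a2 * Qf R P γ (Val π1 π2) s0 a1 a2 ≤ Val π1 π2 s0 := by
  classical
  by_contra hcon
  push_neg at hcon
  set V := Val π1 π2 with hVdef
  set g := (∑ a1, ∑ a2, x a1 * π2 s0 a2 * Qf R P γ V s0 a1 a2) - V s0 with hgdef
  have hgpos : 0 < g := sub_pos.mpr hcon
  set π1' : S → A1 → ℝ := fun t => if t = s0 then x else π1 t with hπ1'
  have hpol1' : IsPolicy π1' := by
    constructor
    · intro s a; by_cases h : s = s0 <;> simp [hπ1', h, hx.1 a, hN.1.1 s a]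
    · intro s; by_cases h : s = s0 <;> simp [hπ1', h, hx.2, hN.1.2 s]
  set W := Val π1' π2 with hWdef
  have hVV : IsValue R P γ π1 π2 V := hVal π1 π2 hN.1 hN.2.1
  have hWV : IsValue R P γ π1' π2 W := hVal π1' π2 hpol1' hN.2.1
  have hWle : W s0 ≤ V s0 := (hN.2.2 s0 π1' π2 hpol1' hN.2.1).2
  obtain ⟨t0, _, ht0⟩ := Finset.exists_min_image univ (fun t => W t - V t) univ_nonempty
  set m := W t0 - V t0 with hmdef
  have hm_all : ∀ t, m ≤ W t - V t := fun t => ht0 t (mem_univ t)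
  have hinner : ∀ t a1 a2, m ≤ ∑ s', P t a1 a2 s' * (W s' - V s') := fun t a1 a2 =>
    le_sum_mul_of_le _ _ m (hP.1 t a1 a2) (hP.2 t a1 a2) hm_all
  have hdsum : ∀ t, m ≤ ∑ a1, ∑ a2, π1' t a1 * π2 t a2 * ∑ s', P t a1 a2 s' * (W s' - V s') :=
    fun t => le_dsum_mul_of_le _ _ _ m ⟨hpol1'.1 t, hpol1'.2 t⟩ ⟨hN.2.1.1 t, hN.2.1.2 t⟩
      (hinner t)
  have hd_s0 : (∑ a1, ∑ a2, π1' s0 a1 * π2 s0 a2 * Qf R P γ V s0 a1 a2) = V s0 + g := by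
    have : ∀ a1, π1' s0 a1 = x a1 := by intro a1; simp [hπ1']
    simp only [this]
    rw [hgdef]; ring
  have hm0 : 0 ≤ m := by
    rcases eq_or_ne t0 s0 with h | h
    · have hk := value_expand R P γ π1' π2 W V hWV t0
      rw [h] at hk
      rw [hd_s0] at hk
      have h2 := hdsum s0
      have h3 : m = W s0 - V s0 := by rw [hmdef, h]
      nlinarith
    · have hk := value_expand R P γ π1' π2 W V hWV t0
      have heq : (∑ a1, ∑ a2, π1' t0 a1 * π2 t0 a2 * Qf R P γ V t0 a1 a2) = V t0 := by
        have : ∀ a1, π1' t0 a1 = π1 t0 a1 := by intro a1; simp [hπ1', h]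
        simp only [this]
        exact (hVV t0).symm
      rw [heq] at hk
      have h2 := hdsum t0
      nlinarith
  have hk := value_expand R P γ π1' π2 W V hWV s0
  rw [hd_s0] at hk
  have h2 := hdsum s0
  nlinarith

/-- At each state, the Nash policy of player 1 guarantees the value. -/
lemma nash_matrix2 (R : S → A1 → A2 → ℝ) (P : S → A1 → A2 → S → ℝ) (γ : ℝ)
    (hP : IsKernel P) (hγ0 : 0 ≤ γ) (hγ1 : γ < 1)
    (Val : (S → A1 → ℝ) → (S → A2 → ℝ) → S → ℝ) (hVal : IsValueOperator R P γ Val)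
    (π1 : S → A1 → ℝ) (π2 : S → A2 → ℝ) (hN : IsNash Val π1 π2)
    (s0 : S) (y : A2 → ℝ) (hy : IsDist y) :
    Val π1 π2 s0 ≤ ∑ a1, ∑ a2, π1 s0 a1 * y a2 * Qf R P γ (Val π1 π2) s0 a1 a2 := by
  classical
  by_contra hcon
  push_neg at hcon
  set V := Val π1 π2 with hVdef
  set g := V s0 - (∑ a1, ∑ a2, π1 s0 a1 * y a2 * Qf R P γ V s0 a1 a2) with hgdef
  have hgpos : 0 < g := sub_pos.mpr hcon
  set π2' : S → A2 → ℝ := fun t => if t = s0 then y else π2 t with hπ2'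
  have hpol2' : IsPolicy π2' := by
    constructor
    · intro s a; by_cases h : s = s0 <;> simp [hπ2', h, hy.1 a, hN.2.1.1 s a]
    · intro s; by_cases h : s = s0 <;> simp [hπ2', h, hy.2, hN.2.1.2 s]
  set W := Val π1 π2' with hWdef
  have hVV : IsValue R P γ π1 π2 V := hVal π1 π2 hN.1 hN.2.1
  have hWV : IsValue R P γ π1 π2' W := hVal π1 π2' hN.1 hpol2'
  have hWge : V s0 ≤ W s0 := (hN.2.2 s0 π1 π2' hN.1 hpol2').1
  obtain ⟨t0, _, ht0⟩ := Finset.exists_max_image univ (fun t => W t - V t) univ_nonempty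
  set m := W t0 - V t0 with hmdef
  have hm_all : ∀ t, W t - V t ≤ m := fun t => ht0 t (mem_univ t)
  have hinner : ∀ t a1 a2, ∑ s', P t a1 a2 s' * (W s' - V s') ≤ m := fun t a1 a2 =>
    sum_mul_le_of_le _ _ m (hP.1 t a1 a2) (hP.2 t a1 a2) hm_all
  have hdsum : ∀ t, (∑ a1, ∑ a2, π1 t a1 * π2' t a2 * ∑ s', P t a1 a2 s' * (W s' - V s')) ≤ m :=
    fun t => dsum_mul_le_of_le _ _ _ m ⟨hN.1.1 t, hN.1.2 t⟩ ⟨hpol2'.1 t, hpol2'.2 t⟩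
      (hinner t)
  have hd_s0 : (∑ a1, ∑ a2, π1 s0 a1 * π2' s0 a2 * Qf R P γ V s0 a1 a2) = V s0 - g := by
    have : ∀ a2, π2' s0 a2 = y a2 := by intro a2; simp [hπ2']
    simp only [this]
    rw [hgdef]; ring
  have hm0 : m ≤ 0 := by
    rcases eq_or_ne t0 s0 with h | h
    · have hk := value_expand R P γ π1 π2' W V hWV t0
      rw [h] at hk
      rw [hd_s0] at hk
      have h2 := hdsum s0
      have h3 : m = W s0 - V s0 := by rw [hmdef, h]
      nlinarith
    · have hk := value_expand R P γ π1 π2' W V hWV t0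
      have heq : (∑ a1, ∑ a2, π1 t0 a1 * π2' t0 a2 * Qf R P γ V t0 a1 a2) = V t0 := by
        have : ∀ a2, π2' t0 a2 = π2 t0 a2 := by intro a2; simp [hπ2', h]
        simp only [this]
        exact (hVV t0).symm
      rw [heq] at hk
      have h2 := hdsum t0
      nlinarith
  have hk := value_expand R P γ π1 π2' W V hWV s0
  rw [hd_s0] at hk
  have h2 := hdsum s0
  nlinarith


/-- performance bound: if the one-step application of `(π1, π2)` to `Vs` exceeds `Vs`
by at most `e` at every state, the value of `(π1,π2)` exceeds `Vs` by at most `e/(1-γ)`. -/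
lemma val_le_of_step (R : S → A1 → A2 → ℝ) (P : S → A1 → A2 → S → ℝ) (γ : ℝ)
    (hP : IsKernel P) (hγ0 : 0 ≤ γ) (hγ1 : γ < 1)
    (π1 : S → A1 → ℝ) (π2 : S → A2 → ℝ) (hπ1 : IsPolicy π1) (hπ2 : IsPolicy π2)
    (Vs W : S → ℝ) (e : ℝ) (hW : IsValue R P γ π1 π2 W)
    (hstep : ∀ s, ∑ a1, ∑ a2, π1 s a1 * π2 s a2 * Qf R P γ Vs s a1 a2 ≤ Vs s + e) :
    ∀ s, W s ≤ Vs s + e / (1 - γ) := by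
  have h1γ : 0 < 1 - γ := by linarith
  obtain ⟨t0, _, ht0⟩ := Finset.exists_max_image univ (fun t => W t - Vs t) univ_nonempty
  set m := W t0 - Vs t0 with hmdef
  have hm_all : ∀ t, W t - Vs t ≤ m := fun t => ht0 t (mem_univ t)
  have hinner : ∀ t a1 a2, ∑ s', P t a1 a2 s' * (W s' - Vs s') ≤ m := fun t a1 a2 =>
    sum_mul_le_of_le _ _ m (hP.1 t a1 a2) (hP.2 t a1 a2) hm_all
  have hdsum : (∑ a1, ∑ a2, π1 t0 a1 * π2 t0 a2 * ∑ s', P t0 a1 a2 s' * (W s' - Vs s')) ≤ m :=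
    dsum_mul_le_of_le _ _ _ m ⟨hπ1.1 t0, hπ1.2 t0⟩ ⟨hπ2.1 t0, hπ2.2 t0⟩ (hinner t0)
  have hk := value_expand R P γ π1 π2 W Vs hW t0
  have hs := hstep t0
  have hm : m ≤ e / (1 - γ) := by
    rw [le_div_iff₀ h1γ]
    nlinarith
  intro s
  have := hm_all s
  linarith

lemma val_ge_of_step (R : S → A1 → A2 → ℝ) (P : S → A1 → A2 → S → ℝ) (γ : ℝ)
    (hP : IsKernel P) (hγ0 : 0 ≤ γ) (hγ1 : γ < 1)
    (π1 : S → A1 → ℝ) (π2 : S → A2 → ℝ) (hπ1 : IsPolicy π1) (hπ2 : IsPolicy π2)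
    (Vs W : S → ℝ) (e : ℝ) (hW : IsValue R P γ π1 π2 W)
    (hstep : ∀ s, Vs s - e ≤ ∑ a1, ∑ a2, π1 s a1 * π2 s a2 * Qf R P γ Vs s a1 a2) :
    ∀ s, Vs s - e / (1 - γ) ≤ W s := by
  have h1γ : 0 < 1 - γ := by linarith
  obtain ⟨t0, _, ht0⟩ := Finset.exists_min_image univ (fun t => W t - Vs t) univ_nonempty
  set m := W t0 - Vs t0 with hmdef
  have hm_all : ∀ t, m ≤ W t - Vs t := fun t => ht0 t (mem_univ t)
  have hinner : ∀ t a1 a2, m ≤ ∑ s', P t a1 a2 s' * (W s' - Vs s') := fun t a1 a2 =>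
    le_sum_mul_of_le _ _ m (hP.1 t a1 a2) (hP.2 t a1 a2) hm_all
  have hdsum : m ≤ ∑ a1, ∑ a2, π1 t0 a1 * π2 t0 a2 * ∑ s', P t0 a1 a2 s' * (W s' - Vs s') :=
    le_dsum_mul_of_le _ _ _ m ⟨hπ1.1 t0, hπ1.2 t0⟩ ⟨hπ2.1 t0, hπ2.2 t0⟩ (hinner t0)
  have hk := value_expand R P γ π1 π2 W Vs hW t0
  have hs := hstep t0
  have hm : -(e / (1 - γ)) ≤ m := by
    rw [neg_le, ← sub_nonneg]
    have : e / (1 - γ) * (1 - γ) = e := div_mul_cancel₀ e (ne_of_gt h1γ)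
    nlinarith
  intro s
  have := hm_all s
  linarith

/-- convex combination over a finset, upper bound -/
lemma fsum_mul_le_of_le {ι : Type*} (t : Finset ι) (p f : ι → ℝ) (c : ℝ)
    (hp : ∀ i, 0 ≤ p i) (hps : ∑ i ∈ t, p i = 1) (hf : ∀ i ∈ t, f i ≤ c) :
    ∑ i ∈ t, p i * f i ≤ c := by
  calc ∑ i ∈ t, p i * f i ≤ ∑ i ∈ t, p i * c := by
        apply Finset.sum_le_sum
        intro i hi
        exact mul_le_mul_of_nonneg_left (hf i hi) (hp i)
    _ = c := by rw [← Finset.sum_mul, hps, one_mul]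

/-- convex combination over a finset, absolute bound -/
lemma abs_fsum_mul_le {ι : Type*} (t : Finset ι) (p f : ι → ℝ) (c : ℝ)
    (hp : ∀ i, 0 ≤ p i) (hps : ∑ i ∈ t, p i = 1) (hf : ∀ i ∈ t, |f i| ≤ c) :
    |∑ i ∈ t, p i * f i| ≤ c := by
  calc |∑ i ∈ t, p i * f i| ≤ ∑ i ∈ t, |p i * f i| := Finset.abs_sum_le_sum_abs _ _
    _ = ∑ i ∈ t, p i * |f i| := by
        apply Finset.sum_congr rfl; intro i _
        rw [abs_mul, abs_of_nonneg (hp i)]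
    _ ≤ c := fsum_mul_le_of_le t p _ c hp hps hf

end Aux

section Agg

variable {S SA A1 A2 : Type*} [Fintype S] [Nonempty S] [Fintype SA] [DecidableEq SA]
  [Fintype A1] [Fintype A2]

lemma PA_isKernel (P : S → A1 → A2 → S → ℝ) (hP : IsKernel P)
    (φ : S → SA) (w : S → ℝ) (hw : IsAggWeight φ w) : IsKernel (PA P φ w) := by
  constructor
  · intro sA a1 a2 sA'
    apply Finset.sum_nonneg; intro s _
    apply Finset.sum_nonneg; intro s' _
    exact mul_nonneg (hP.1 s a1 a2 s') (hw.1 s).1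
  · intro sA a1 a2
    simp only [PA]
    rw [Finset.sum_comm]
    calc ∑ s ∈ univ.filter (fun s => φ s = sA), ∑ sA',
          ∑ s' ∈ univ.filter (fun s' => φ s' = sA'), P s a1 a2 s' * w s
        = ∑ s ∈ univ.filter (fun s => φ s = sA), w s := by
          apply Finset.sum_congr rfl; intro s _
          rw [Finset.sum_fiberwise univ φ (fun s' => P s a1 a2 s' * w s)]
          rw [← Finset.sum_mul, hP.2 s a1 a2, one_mul]
      _ = 1 := hw.2 sA

lemma RA_isReward (R : S → A1 → A2 → ℝ) (hR : IsReward R)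
    (φ : S → SA) (w : S → ℝ) (hw : IsAggWeight φ w) : IsReward (RA R φ w) := by
  intro sA a1 a2
  constructor
  · apply Finset.sum_nonneg; intro s _
    exact mul_nonneg (hR s a1 a2).1 (hw.1 s).1
  · calc ∑ s ∈ univ.filter (fun s => φ s = sA), R s a1 a2 * w s
        ≤ ∑ s ∈ univ.filter (fun s => φ s = sA), w s := by
          apply Finset.sum_le_sum; intro s _
          nlinarith [(hR s a1 a2).1, (hR s a1 a2).2, (hw.1 s).1]
      _ = 1 := hw.2 sA

/-- key identity comparing abstract Q to the weighted ground Q. -/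
lemma QA_diff (R : S → A1 → A2 → ℝ) (P : S → A1 → A2 → S → ℝ) (γ : ℝ)
    (φ : S → SA) (w : S → ℝ) (VA : SA → ℝ) (Vg : S → ℝ) (sA : SA) (a1 : A1) (a2 : A2) :
    Qf (RA R φ w) (PA P φ w) γ VA sA a1 a2
      - ∑ s ∈ univ.filter (fun s => φ s = sA), w s * Qf R P γ Vg s a1 a2
    = γ * ∑ s ∈ univ.filter (fun s => φ s = sA),
        w s * ∑ s', P s a1 a2 s' * (VA (φ s') - Vg s') := by
  have step1 : ∑ sA', PA P φ w sA a1 a2 sA' * VA sA'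
      = ∑ s ∈ univ.filter (fun s => φ s = sA), w s * ∑ s', P s a1 a2 s' * VA (φ s') := by
    calc ∑ sA', PA P φ w sA a1 a2 sA' * VA sA'
        = ∑ sA', ∑ s ∈ univ.filter (fun s => φ s = sA),
            ∑ s' ∈ univ.filter (fun s' => φ s' = sA'), P s a1 a2 s' * w s * VA sA' := by
          apply Finset.sum_congr rfl; intro sA' _
          rw [PA, Finset.sum_mul]
          apply Finset.sum_congr rfl; intro s _
          rw [Finset.sum_mul]
      _ = ∑ s ∈ univ.filter (fun s => φ s = sA), ∑ sA',
            ∑ s' ∈ univ.filter (fun s' => φ s' = sA'), P s a1 a2 s' * w s * VA (φ s') := by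
          rw [Finset.sum_comm]
          apply Finset.sum_congr rfl; intro s _
          apply Finset.sum_congr rfl; intro sA' _
          apply Finset.sum_congr rfl; intro s' hs'
          rw [(Finset.mem_filter.mp hs').2]
      _ = ∑ s ∈ univ.filter (fun s => φ s = sA), ∑ s', P s a1 a2 s' * w s * VA (φ s') := by
          apply Finset.sum_congr rfl; intro s _
          exact Finset.sum_fiberwise univ φ (fun s' => P s a1 a2 s' * w s * VA (φ s'))
      _ = _ := by
          apply Finset.sum_congr rfl; intro s _
          rw [Finset.mul_sum]
          apply Finset.sum_congr rfl; intro s' _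
          ring
  have step2 : ∑ s ∈ univ.filter (fun s => φ s = sA), w s * Qf R P γ Vg s a1 a2
      = RA R φ w sA a1 a2
        + γ * ∑ s ∈ univ.filter (fun s => φ s = sA), w s * ∑ s', P s a1 a2 s' * Vg s' := by
    rw [RA, Finset.mul_sum, ← Finset.sum_add_distrib]
    apply Finset.sum_congr rfl; intro s _
    rw [Qf]; ring
  rw [Qf, step1, step2]
  have h3 : ∑ s ∈ univ.filter (fun s => φ s = sA), w s * ∑ s', P s a1 a2 s' * (VA (φ s') - Vg s')
      = (∑ s ∈ univ.filter (fun s => φ s = sA), w s * ∑ s', P s a1 a2 s' * VA (φ s'))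
        - ∑ s ∈ univ.filter (fun s => φ s = sA), w s * ∑ s', P s a1 a2 s' * Vg s' := by
    rw [← Finset.sum_sub_distrib]
    apply Finset.sum_congr rfl; intro s _
    rw [← mul_sub, ← Finset.sum_sub_distrib]
    congr 1
    apply Finset.sum_congr rfl; intro s' _
    ring
  rw [h3]; ring

end Agg

theorem duality_gap_bound_multinomial_similarity
    {S SA A1 A2 : Type*}
    [Fintype S] [Nonempty S] [Fintype SA] [DecidableEq SA]
    [Fintype A1] [Nonempty A1] [Fintype A2] [Nonempty A2]
    (P : S → A1 → A2 → S → ℝ) (R : S → A1 → A2 → ℝ) (γ : ℝ)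
    (hP : IsKernel P) (hR : IsReward R) (hγ0 : 0 ≤ γ) (hγ1 : γ < 1)
    (Val : (S → A1 → ℝ) → (S → A2 → ℝ) → S → ℝ)
    (hVal : IsValueOperator R P γ Val)
    (φ : S → SA) (hφ : Function.Surjective φ)
    (w : S → ℝ) (hw : IsAggWeight φ w)
    (ValA : (SA → A1 → ℝ) → (SA → A2 → ℝ) → SA → ℝ)
    (hValA : IsValueOperator (RA R φ w) (PA P φ w) γ ValA)
    (πA1 : SA → A1 → ℝ) (πA2 : SA → A2 → ℝ)
    (hNashA : IsNash ValA πA1 πA2)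
    (π1s : S → A1 → ℝ) (π2s : S → A2 → ℝ)
    (hNash : IsNash Val π1s π2s)
    (ε k δ : ℝ) (hε : 0 ≤ ε) (hk : 0 ≤ k) (hδ : 0 < δ)
    (hagg : ∀ s1 s2 : S, φ s1 = φ s2 →
      (∀ (a1 : A1) (a2 : A2),
        |Qf R P γ (Val π1s π2s) s1 a1 a2 / (∑ b1, ∑ b2, Qf R P γ (Val π1s π2s) s1 b1 b2)
          - Qf R P γ (Val π1s π2s) s2 a1 a2 / (∑ b1, ∑ b2, Qf R P γ (Val π1s π2s) s2 b1 b2)| ≤ ε) ∧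
      |(∑ b1, ∑ b2, Qf R P γ (Val π1s π2s) s1 b1 b2) - (∑ b1, ∑ b2, Qf R P γ (Val π1s π2s) s2 b1 b2)| ≤ k * ε)
    (hQsum : ∀ s : S, δ ≤ |∑ b1, ∑ b2, Qf R P γ (Val π1s π2s) s b1 b2|) :
    ∀ s : S, ∀ (π1' : S → A1 → ℝ) (π2' : S → A2 → ℝ), IsPolicy π1' → IsPolicy π2' →
      Val π1' (fun s => πA2 (φ s)) s - Val (fun s => πA1 (φ s)) π2' s
        ≤ 12 * ((Fintype.card A1 : ℝ) * (Fintype.card A2 : ℝ) + k / δ) * ε / (1 - γ) ^ 4 := by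
  classical
  haveI : Nonempty SA := Nonempty.map φ inferInstance
  have h1γ : 0 < 1 - γ := by linarith
  set cc : ℝ := (Fintype.card A1 : ℝ) * (Fintype.card A2 : ℝ) with hccdef
  have hcc0 : 0 ≤ cc := by positivity
  set ε' : ℝ := (cc + k / δ) * ε / (1 - γ) with hε'def
  have hX0 : 0 ≤ (cc + k / δ) * ε :=
    mul_nonneg (add_nonneg hcc0 (div_nonneg hk hδ.le)) hε
  have hε'0 : 0 ≤ ε' := div_nonneg hX0 h1γ.le
  set Vg := Val π1s π2s with hVgdef
  have hVgval : IsValue R P γ π1s π2s Vg := hVal π1s π2s hNash.1 hNash.2.1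
  have hVgb := value_bounds R P γ hP hR hγ0 hγ1 π1s π2s hNash.1 hNash.2.1 Vg hVgval
  have hinv1 : (1 / (1 - γ)) * (1 - γ) = 1 := by field_simp
  -- Q bounds
  have hQgb : ∀ s a1 a2, 0 ≤ Qf R P γ Vg s a1 a2 ∧ Qf R P γ Vg s a1 a2 ≤ 1 / (1 - γ) := by
    intro s a1 a2
    have hub : ∑ s', P s a1 a2 s' * Vg s' ≤ 1 / (1 - γ) :=
      sum_mul_le_of_le _ _ _ (hP.1 s a1 a2) (hP.2 s a1 a2) (fun t => (hVgb t).2)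
    have hlb : 0 ≤ ∑ s', P s a1 a2 s' * Vg s' :=
      Finset.sum_nonneg fun t _ => mul_nonneg (hP.1 s a1 a2 t) (hVgb t).1
    constructor
    · simp only [Qf]
      exact add_nonneg (hR s a1 a2).1 (mul_nonneg hγ0 hlb)
    · simp only [Qf]
      nlinarith [(hR s a1 a2).2, mul_le_mul_of_nonneg_left hub hγ0]
  -- bound on the Q-sums
  have hT : ∀ s, |∑ b1, ∑ b2, Qf R P γ Vg s b1 b2| ≤ cc / (1 - γ) := by
    intro s
    have h0 : 0 ≤ ∑ b1, ∑ b2, Qf R P γ Vg s b1 b2 :=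
      Finset.sum_nonneg fun b1 _ => Finset.sum_nonneg fun b2 _ => (hQgb s b1 b2).1
    rw [abs_of_nonneg h0]
    calc ∑ b1, ∑ b2, Qf R P γ Vg s b1 b2
        ≤ ∑ b1 : A1, ∑ b2 : A2, 1 / (1 - γ) :=
          Finset.sum_le_sum fun b1 _ => Finset.sum_le_sum fun b2 _ => (hQgb s b1 b2).2
      _ = cc / (1 - γ) := by
          simp [Finset.sum_const, Finset.card_univ, nsmul_eq_mul, hccdef]
          ring
  -- Q-similarity in ground terms
  have hQsim : ∀ s1 s2, φ s1 = φ s2 → ∀ a1 a2,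
      |Qf R P γ Vg s1 a1 a2 - Qf R P γ Vg s2 a1 a2| ≤ ε' := by
    intro s1 s2 hφq a1 a2
    obtain ⟨hra, hTd⟩ := hagg s1 s2 hφq
    set T1 := ∑ b1, ∑ b2, Qf R P γ Vg s1 b1 b2 with hT1def
    set T2 := ∑ b1, ∑ b2, Qf R P γ Vg s2 b1 b2 with hT2def
    have hd1 : δ ≤ |T1| := by rw [hT1def]; exact hQsum s1
    have hd2 : δ ≤ |T2| := by rw [hT2def]; exact hQsum s2
    have hT1ne : T1 ≠ 0 := by
      intro h; rw [h] at hd1; simp at hd1; linarith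
    have hT2ne : T2 ≠ 0 := by
      intro h; rw [h] at hd2; simp at hd2; linarith
    have hid : Qf R P γ Vg s1 a1 a2 - Qf R P γ Vg s2 a1 a2
        = (Qf R P γ Vg s1 a1 a2 / T1 - Qf R P γ Vg s2 a1 a2 / T2) * T1
          + (Qf R P γ Vg s2 a1 a2 / T2) * (T1 - T2) := by
      field_simp
      ring
    rw [hid]
    have hr2 : |Qf R P γ Vg s2 a1 a2 / T2| ≤ (1 / (1 - γ)) / δ := by
      rw [abs_div]
      apply div_le_div₀ (by positivity)
        (by rw [abs_of_nonneg (hQgb s2 a1 a2).1]; exact (hQgb s2 a1 a2).2) hδ hd2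
    calc |(Qf R P γ Vg s1 a1 a2 / T1 - Qf R P γ Vg s2 a1 a2 / T2) * T1
          + (Qf R P γ Vg s2 a1 a2 / T2) * (T1 - T2)|
        ≤ |(Qf R P γ Vg s1 a1 a2 / T1 - Qf R P γ Vg s2 a1 a2 / T2) * T1|
          + |(Qf R P γ Vg s2 a1 a2 / T2) * (T1 - T2)| := abs_add_le _ _
      _ ≤ ε * (cc / (1 - γ)) + ((1 / (1 - γ)) / δ) * (k * ε) := by
          apply add_le_add
          · rw [abs_mul]
            exact mul_le_mul (hra a1 a2) (hT s1) (abs_nonneg _) hε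
          · rw [abs_mul]
            exact mul_le_mul hr2 hTd (abs_nonneg _)
              (div_nonneg (div_nonneg zero_le_one h1γ.le) hδ.le)
      _ = ε' := by
          rw [hε'def]
          field_simp
  -- ground per-state matrix Nash facts
  have hg1 : ∀ s x, IsDist x →
      ∑ a1, ∑ a2, x a1 * π2s s a2 * Qf R P γ Vg s a1 a2 ≤ Vg s := fun s x hx =>
    nash_matrix1 R P γ hP hγ0 hγ1 Val hVal π1s π2s hNash s x hx
  have hg2 : ∀ s y, IsDist y →
      Vg s ≤ ∑ a1, ∑ a2, π1s s a1 * y a2 * Qf R P γ Vg s a1 a2 := fun s y hy =>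
    nash_matrix2 R P γ hP hγ0 hγ1 Val hVal π1s π2s hNash s y hy
  -- abstract game
  have hPA : IsKernel (PA P φ w) := PA_isKernel P hP φ w hw
  set VA := ValA πA1 πA2 with hVAdef
  have hA1 : ∀ sA x, IsDist x →
      ∑ a1, ∑ a2, x a1 * πA2 sA a2 * Qf (RA R φ w) (PA P φ w) γ VA sA a1 a2 ≤ VA sA :=
    fun sA x hx =>
      nash_matrix1 (RA R φ w) (PA P φ w) γ hPA hγ0 hγ1 ValA hValA πA1 πA2 hNashA sA x hx
  have hA2 : ∀ sA y, IsDist y →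
      VA sA ≤ ∑ a1, ∑ a2, πA1 sA a1 * y a2 * Qf (RA R φ w) (PA P φ w) γ VA sA a1 a2 :=
    fun sA y hy =>
      nash_matrix2 (RA R φ w) (PA P φ w) γ hPA hγ0 hγ1 ValA hValA πA1 πA2 hNashA sA y hy
  -- the Q-difference maximum Δ
  obtain ⟨p0, _, hmax⟩ := Finset.exists_max_image (univ : Finset (S × A1 × A2))
    (fun p => |Qf (RA R φ w) (PA P φ w) γ VA (φ p.1) p.2.1 p.2.2
      - Qf R P γ Vg p.1 p.2.1 p.2.2|) univ_nonempty
  set Δ := |Qf (RA R φ w) (PA P φ w) γ VA (φ p0.1) p0.2.1 p0.2.2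
      - Qf R P γ Vg p0.1 p0.2.1 p0.2.2| with hΔdef
  have hΔ : ∀ s a1 a2, |Qf (RA R φ w) (PA P φ w) γ VA (φ s) a1 a2
      - Qf R P γ Vg s a1 a2| ≤ Δ := fun s a1 a2 => hmax (s, a1, a2) (mem_univ _)
  have hΔ0 : 0 ≤ Δ := abs_nonneg _
  -- pairing lemma
  have hpair : ∀ (x : A1 → ℝ) (y : A2 → ℝ), IsDist x → IsDist y → ∀ s : S,
      |(∑ a1, ∑ a2, x a1 * y a2 * Qf (RA R φ w) (PA P φ w) γ VA (φ s) a1 a2)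
        - ∑ a1, ∑ a2, x a1 * y a2 * Qf R P γ Vg s a1 a2| ≤ Δ := by
    intro x y hx hy s
    have heq : (∑ a1, ∑ a2, x a1 * y a2 *
          (Qf (RA R φ w) (PA P φ w) γ VA (φ s) a1 a2 - Qf R P γ Vg s a1 a2))
        = (∑ a1, ∑ a2, x a1 * y a2 * Qf (RA R φ w) (PA P φ w) γ VA (φ s) a1 a2)
          - ∑ a1, ∑ a2, x a1 * y a2 * Qf R P γ Vg s a1 a2 := by
      rw [← Finset.sum_sub_distrib]
      apply Finset.sum_congr rfl; intro a1 _
      rw [← Finset.sum_sub_distrib]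
      apply Finset.sum_congr rfl; intro a2 _
      ring
    rw [← heq]
    rw [abs_le]
    constructor
    · exact le_dsum_mul_of_le x y _ _ hx hy fun a1 a2 => (abs_le.1 (hΔ s a1 a2)).1
    · exact dsum_mul_le_of_le x y _ _ hx hy fun a1 a2 => (abs_le.1 (hΔ s a1 a2)).2
  -- value comparison
  have hVdiff : ∀ s, |VA (φ s) - Vg s| ≤ Δ := by
    intro s
    have hd1 : IsDist (πA1 (φ s)) := ⟨hNashA.1.1 (φ s), hNashA.1.2 (φ s)⟩
    have hd2 : IsDist (πA2 (φ s)) := ⟨hNashA.2.1.1 (φ s), hNashA.2.1.2 (φ s)⟩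
    have hd1g : IsDist (π1s s) := ⟨hNash.1.1 s, hNash.1.2 s⟩
    have hd2g : IsDist (π2s s) := ⟨hNash.2.1.1 s, hNash.2.1.2 s⟩
    have h1 : VA (φ s) ≤ Vg s + Δ := by
      have ha := hA2 (φ s) (π2s s) hd2g
      have hp := abs_le.1 (hpair (πA1 (φ s)) (π2s s) hd1 hd2g s)
      have hgr := hg1 s (πA1 (φ s)) hd1
      linarith [hp.1, hp.2]
    have h2 : Vg s ≤ VA (φ s) + Δ := by
      have ha := hA1 (φ s) (π1s s) hd1g
      have hp := abs_le.1 (hpair (π1s s) (πA2 (φ s)) hd1g hd2 s)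
      have hgr := hg2 s (πA2 (φ s)) hd2
      linarith [hp.1, hp.2]
    rw [abs_le]
    constructor <;> linarith
  -- contraction: Δ ≤ ε' + γΔ
  have hcontr : Δ ≤ ε' + γ * Δ := by
    obtain ⟨s0, a10, a20⟩ := p0
    have hQd := QA_diff R P γ φ w VA Vg (φ s0) a10 a20
    set Qbar := ∑ s ∈ univ.filter (fun s => φ s = φ s0), w s * Qf R P γ Vg s a10 a20
      with hQbardef
    have h1 : |Qf (RA R φ w) (PA P φ w) γ VA (φ s0) a10 a20 - Qbar| ≤ γ * Δ := by
      rw [hQbardef, hQd, abs_mul, abs_of_nonneg hγ0]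
      apply mul_le_mul_of_nonneg_left _ hγ0
      apply abs_fsum_mul_le _ w _ Δ (fun s => (hw.1 s).1) (hw.2 (φ s0))
      intro s _
      exact abs_fsum_mul_le univ (P s a10 a20) _ Δ (hP.1 s a10 a20) (hP.2 s a10 a20)
        (fun s' _ => hVdiff s')
    have h2 : |Qbar - Qf R P γ Vg s0 a10 a20| ≤ ε' := by
      have hrw : ∑ s ∈ univ.filter (fun s => φ s = φ s0),
              w s * (Qf R P γ Vg s a10 a20 - Qf R P γ Vg s0 a10 a20)
          = Qbar - Qf R P γ Vg s0 a10 a20 := by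
        have h0 : ∑ s ∈ univ.filter (fun s => φ s = φ s0),
              w s * (Qf R P γ Vg s a10 a20 - Qf R P γ Vg s0 a10 a20)
            = (∑ s ∈ univ.filter (fun s => φ s = φ s0), w s * Qf R P γ Vg s a10 a20)
              - (∑ s ∈ univ.filter (fun s => φ s = φ s0), w s) * Qf R P γ Vg s0 a10 a20 := by
          rw [Finset.sum_mul, ← Finset.sum_sub_distrib]
          exact Finset.sum_congr rfl fun s _ => by ring
        rw [h0, hw.2 (φ s0), one_mul, hQbardef]
      rw [← hrw]
      apply abs_fsum_mul_le _ w _ ε' (fun s => (hw.1 s).1) (hw.2 (φ s0))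
      intro s hs
      exact hQsim s s0 (Finset.mem_filter.mp hs).2 a10 a20
    calc Δ ≤ |Qf (RA R φ w) (PA P φ w) γ VA (φ s0) a10 a20 - Qbar|
          + |Qbar - Qf R P γ Vg s0 a10 a20| := by
            rw [hΔdef]
            exact abs_sub_le _ _ _
      _ ≤ γ * Δ + ε' := add_le_add h1 h2
      _ = ε' + γ * Δ := by ring
  have hΔle : Δ * (1 - γ) ≤ ε' := by nlinarith
  -- ground policies induced by the abstract Nash profile
  have hpol2g : IsPolicy (fun t : S => πA2 (φ t)) :=
    ⟨fun t a => hNashA.2.1.1 (φ t) a, fun t => hNashA.2.1.2 (φ t)⟩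
  have hpol1g : IsPolicy (fun t : S => πA1 (φ t)) :=
    ⟨fun t a => hNashA.1.1 (φ t) a, fun t => hNashA.1.2 (φ t)⟩
  intro s π1' π2' hp1' hp2'
  -- one-step bounds
  have hstep1 : ∀ t, ∑ a1, ∑ a2, π1' t a1 * πA2 (φ t) a2 * Qf R P γ Vg t a1 a2
      ≤ Vg t + 2 * Δ := by
    intro t
    have hd1 : IsDist (π1' t) := ⟨hp1'.1 t, hp1'.2 t⟩
    have ha := hA1 (φ t) (π1' t) hd1
    have hp := abs_le.1 (hpair (π1' t) (πA2 (φ t)) hd1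
      ⟨hNashA.2.1.1 (φ t), hNashA.2.1.2 (φ t)⟩ t)
    have hv := abs_le.1 (hVdiff t)
    linarith [hp.1, hv.1]
  have hstep2 : ∀ t, Vg t - 2 * Δ
      ≤ ∑ a1, ∑ a2, πA1 (φ t) a1 * π2' t a2 * Qf R P γ Vg t a1 a2 := by
    intro t
    have hd2 : IsDist (π2' t) := ⟨hp2'.1 t, hp2'.2 t⟩
    have ha := hA2 (φ t) (π2' t) hd2
    have hp := abs_le.1 (hpair (πA1 (φ t)) (π2' t)
      ⟨hNashA.1.1 (φ t), hNashA.1.2 (φ t)⟩ hd2 t)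
    have hv := abs_le.1 (hVdiff t)
    linarith [hp.2, hv.2]
  have hW1 := val_le_of_step R P γ hP hγ0 hγ1 π1' (fun t => πA2 (φ t)) hp1' hpol2g
    Vg (Val π1' (fun t => πA2 (φ t))) (2 * Δ) (hVal _ _ hp1' hpol2g) hstep1
  have hW2 := val_ge_of_step R P γ hP hγ0 hγ1 (fun t => πA1 (φ t)) π2' hpol1g hp2'
    Vg (Val (fun t => πA1 (φ t)) π2') (2 * Δ) (hVal _ _ hpol1g hp2') hstep2
  have h1 := hW1 s
  have h2 := hW2 s
  have hkey : Δ * (1 - γ) ^ 2 ≤ (cc + k / δ) * ε := by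
    have : ε' * (1 - γ) = (cc + k / δ) * ε := by
      rw [hε'def]; field_simp
    nlinarith
  have hfinal : 4 * Δ / (1 - γ) ≤ 12 * (cc + k / δ) * ε / (1 - γ) ^ 4 := by
    rw [div_le_div_iff₀ h1γ (by positivity)]
    nlinarith [mul_nonneg hX0 h1γ.le, mul_nonneg (mul_nonneg hX0 h1γ.le) h1γ.le,
      mul_nonneg hΔ0 h1γ.le, sq_nonneg (1 - γ), mul_le_mul_of_nonneg_right hkey
        (mul_pos h1γ h1γ).le]
  calc Val π1' (fun t => πA2 (φ t)) s - Val (fun t => πA1 (φ t)) π2' s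
      ≤ (Vg s + 2 * Δ / (1 - γ)) - (Vg s - 2 * Δ / (1 - γ)) := by linarith
    _ = 4 * Δ / (1 - γ) := by ring
    _ ≤ 12 * (cc + k / δ) * ε / (1 - γ) ^ 4 := hfinal
end

section
/- Suppose the aggregation map φ satisfies: φ(s1) = φ(s2) implies |Q*(s1, a) − Q*(s2, a)| ≤ ε for all a ∈ A1×A2, for some ε ≥ 0. Then for every s ∈ S, |V*(s) − V_A^{π_A*}(φ(s))| ≤ ε/(1−γ). -/
open Finset

section Aux

open Finset

private lemma abs_combo {ι : Type*} (t : Finset ι) (c f : ι → ℝ)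
    (hc0 : ∀ i ∈ t, 0 ≤ c i) (hc1 : ∑ i ∈ t, c i = 1) {B : ℝ}
    (hf : ∀ i ∈ t, |f i| ≤ B) : |∑ i ∈ t, c i * f i| ≤ B := by
  calc |∑ i ∈ t, c i * f i| ≤ ∑ i ∈ t, |c i * f i| := Finset.abs_sum_le_sum_abs _ _
    _ = ∑ i ∈ t, c i * |f i| := by
        refine Finset.sum_congr rfl fun i hi => ?_
        rw [abs_mul, abs_of_nonneg (hc0 i hi)]
    _ ≤ ∑ i ∈ t, c i * B := Finset.sum_le_sum fun i hi =>
        mul_le_mul_of_nonneg_left (hf i hi) (hc0 i hi)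
    _ = B := by rw [← Finset.sum_mul, hc1, one_mul]

private lemma abs_combo2 {A1 A2 : Type*} [Fintype A1] [Fintype A2]
    (p : A1 → ℝ) (q : A2 → ℝ) (hp0 : ∀ a, 0 ≤ p a) (hq0 : ∀ a, 0 ≤ q a)
    (hp1 : ∑ a, p a = 1) (hq1 : ∑ a, q a = 1) (f : A1 → A2 → ℝ) {B : ℝ}
    (hf : ∀ a1 a2, |f a1 a2| ≤ B) :
    |∑ a1, ∑ a2, p a1 * q a2 * f a1 a2| ≤ B := by
  have h := abs_combo (univ : Finset (A1 × A2)) (fun a => p a.1 * q a.2)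
    (fun a => f a.1 a.2) (fun i _ => mul_nonneg (hp0 i.1) (hq0 i.2))
    (by rw [Fintype.sum_prod_type]
        simp only [← Finset.mul_sum, hq1, mul_one, hp1])
    (fun i _ => hf i.1 i.2)
  rwa [Fintype.sum_prod_type] at h

private lemma wsum_one {S A1 A2 : Type*} [Fintype A1] [Fintype A2]
    (π1 : S → A1 → ℝ) (π2 : S → A2 → ℝ) (h1 : IsPolicy π1) (h2 : IsPolicy π2) (t : S) :
    ∑ a1, ∑ a2, π1 t a1 * π2 t a2 = 1 := by
  simp only [← Finset.mul_sum, h2.2 t, mul_one, h1.2 t]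

/-- One-shot deviation inequality for player 1 (the maximizer). -/
private lemma deviation1 {S A1 A2 : Type*} [Fintype S] [Nonempty S] [Fintype A1] [Fintype A2]
    (R : S → A1 → A2 → ℝ) (P : S → A1 → A2 → S → ℝ) (γ : ℝ)
    (hP : IsKernel P) (hγ0 : 0 ≤ γ) (hγ1 : γ < 1)
    (Val : (S → A1 → ℝ) → (S → A2 → ℝ) → S → ℝ)
    (hVal : IsValueOperator R P γ Val)
    (π1 : S → A1 → ℝ) (π2 : S → A2 → ℝ) (h1 : IsPolicy π1) (h2 : IsPolicy π2)
    (hN : ∀ π1', IsPolicy π1' → ∀ t, Val π1' π2 t ≤ Val π1 π2 t)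
    (s : S) (p : A1 → ℝ) (hp0 : ∀ a, 0 ≤ p a) (hp1 : ∑ a, p a = 1) :
    ∑ a1, ∑ a2, p a1 * π2 s a2 * Qf R P γ (Val π1 π2) s a1 a2 ≤ Val π1 π2 s := by
  classical
  by_contra hcon
  push_neg at hcon
  set V := Val π1 π2 with hVdef
  set π1' : S → A1 → ℝ := fun t => if t = s then p else π1 t with hπ1'
  have hpol' : IsPolicy π1' := by
    constructor
    · intro t a; by_cases h : t = s <;> simp [hπ1', h, hp0, h1.1]
    · intro t; by_cases h : t = s <;> simp [hπ1', h, hp1, h1.2]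
  set W := Val π1' π2 with hWdef
  have hWB : ∀ t, W t = ∑ a1, ∑ a2, π1' t a1 * π2 t a2 * Qf R P γ W t a1 a2 :=
    fun t => hVal π1' π2 hpol' h2 t
  have hVB : ∀ t, V t = ∑ a1, ∑ a2, π1 t a1 * π2 t a2 * Qf R P γ V t a1 a2 :=
    fun t => hVal π1 π2 h1 h2 t
  have hWV : ∀ t, W t ≤ V t := hN π1' hpol'
  obtain ⟨t0, _, ht0⟩ := Finset.exists_mem_eq_inf' (univ_nonempty (α := S))
    (fun t => W t - V t)
  set m := univ.inf' univ_nonempty (fun t => W t - V t) with hm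
  have hmle : ∀ t, m ≤ W t - V t := fun t => Finset.inf'_le _ (mem_univ t)
  have hQ : ∀ t a1 a2, Qf R P γ V t a1 a2 + γ * m ≤ Qf R P γ W t a1 a2 := by
    intro t a1 a2
    have h1' : ∑ s', P t a1 a2 s' * V s' + m ≤ ∑ s', P t a1 a2 s' * W s' := by
      have h2' : ∑ s', P t a1 a2 s' * V s' + ∑ s', P t a1 a2 s' * m
          ≤ ∑ s', P t a1 a2 s' * W s' := by
        rw [← Finset.sum_add_distrib]
        refine Finset.sum_le_sum fun s' _ => ?_
        have := hmle s'
        nlinarith [hP.1 t a1 a2 s']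
      rw [← Finset.sum_mul, hP.2 t a1 a2, one_mul] at h2'
      exact h2'
    simp only [Qf]
    nlinarith
  have key : ∀ t, (∑ a1, ∑ a2, π1' t a1 * π2 t a2 * Qf R P γ V t a1 a2) + γ * m ≤ W t := by
    intro t
    rw [hWB t]
    have hsum : ∑ a1, ∑ a2, π1' t a1 * π2 t a2 * (Qf R P γ V t a1 a2 + γ * m)
        ≤ ∑ a1, ∑ a2, π1' t a1 * π2 t a2 * Qf R P γ W t a1 a2 := by
      refine Finset.sum_le_sum fun a1 _ => Finset.sum_le_sum fun a2 _ => ?_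
      have h0 : 0 ≤ π1' t a1 * π2 t a2 := mul_nonneg (hpol'.1 t a1) (h2.1 t a2)
      have := hQ t a1 a2
      nlinarith
    have hexp : ∑ a1, ∑ a2, π1' t a1 * π2 t a2 * (Qf R P γ V t a1 a2 + γ * m)
        = (∑ a1, ∑ a2, π1' t a1 * π2 t a2 * Qf R P γ V t a1 a2) + γ * m := by
      simp only [mul_add, Finset.sum_add_distrib]
      rw [show ∑ a1, ∑ a2, π1' t a1 * π2 t a2 * (γ * m)
          = (∑ a1, ∑ a2, π1' t a1 * π2 t a2) * (γ * m) by
        simp [Finset.sum_mul]]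
      rw [wsum_one π1' π2 hpol' h2 t, one_mul]
    linarith [hsum, hexp.symm.le]
  have hπs : ∀ a, π1' s a = p a := fun a => by simp [hπ1']
  have keyV : ∀ t, V t + γ * m ≤ W t := by
    intro t
    by_cases hts : t = s
    · subst hts
      have hk := key t
      have : ∑ a1, ∑ a2, π1' t a1 * π2 t a2 * Qf R P γ V t a1 a2
          = ∑ a1, ∑ a2, p a1 * π2 t a2 * Qf R P γ V t a1 a2 := by
        refine Finset.sum_congr rfl fun a1 _ => Finset.sum_congr rfl fun a2 _ => ?_
        rw [hπs a1]
      rw [this] at hk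
      linarith [hcon]
    · have hk := key t
      have : ∑ a1, ∑ a2, π1' t a1 * π2 t a2 * Qf R P γ V t a1 a2
          = ∑ a1, ∑ a2, π1 t a1 * π2 t a2 * Qf R P γ V t a1 a2 := by
        refine Finset.sum_congr rfl fun a1 _ => Finset.sum_congr rfl fun a2 _ => ?_
        simp [hπ1', hts]
      rw [this, ← hVB t] at hk
      exact hk
  have hm0 : 0 ≤ m := by
    have := keyV t0
    have h1' : m = W t0 - V t0 := ht0
    nlinarith
  have hfin := key s
  have : ∑ a1, ∑ a2, π1' s a1 * π2 s a2 * Qf R P γ V s a1 a2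
      = ∑ a1, ∑ a2, p a1 * π2 s a2 * Qf R P γ V s a1 a2 := by
    refine Finset.sum_congr rfl fun a1 _ => Finset.sum_congr rfl fun a2 _ => ?_
    rw [hπs a1]
  rw [this] at hfin
  have := hWV s
  nlinarith

end Aux
section Aux2

open Finset

/-- One-shot deviation inequality for player 2 (the minimizer). -/
private lemma deviation2 {S A1 A2 : Type*} [Fintype S] [Nonempty S] [Fintype A1] [Fintype A2]
    (R : S → A1 → A2 → ℝ) (P : S → A1 → A2 → S → ℝ) (γ : ℝ)
    (hP : IsKernel P) (hγ0 : 0 ≤ γ) (hγ1 : γ < 1)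
    (Val : (S → A1 → ℝ) → (S → A2 → ℝ) → S → ℝ)
    (hVal : IsValueOperator R P γ Val)
    (π1 : S → A1 → ℝ) (π2 : S → A2 → ℝ) (h1 : IsPolicy π1) (h2 : IsPolicy π2)
    (hN : ∀ π2', IsPolicy π2' → ∀ t, Val π1 π2 t ≤ Val π1 π2' t)
    (s : S) (q : A2 → ℝ) (hq0 : ∀ a, 0 ≤ q a) (hq1 : ∑ a, q a = 1) :
    Val π1 π2 s ≤ ∑ a1, ∑ a2, π1 s a1 * q a2 * Qf R P γ (Val π1 π2) s a1 a2 := by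
  classical
  by_contra hcon
  push_neg at hcon
  set V := Val π1 π2 with hVdef
  set π2' : S → A2 → ℝ := fun t => if t = s then q else π2 t with hπ2'
  have hpol' : IsPolicy π2' := by
    constructor
    · intro t a; by_cases h : t = s <;> simp [hπ2', h, hq0, h2.1]
    · intro t; by_cases h : t = s <;> simp [hπ2', h, hq1, h2.2]
  set W := Val π1 π2' with hWdef
  have hWB : ∀ t, W t = ∑ a1, ∑ a2, π1 t a1 * π2' t a2 * Qf R P γ W t a1 a2 :=
    fun t => hVal π1 π2' h1 hpol' t
  have hVB : ∀ t, V t = ∑ a1, ∑ a2, π1 t a1 * π2 t a2 * Qf R P γ V t a1 a2 :=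
    fun t => hVal π1 π2 h1 h2 t
  have hWV : ∀ t, V t ≤ W t := hN π2' hpol'
  obtain ⟨t0, _, ht0⟩ := Finset.exists_mem_eq_sup' (univ_nonempty (α := S))
    (fun t => W t - V t)
  set m := univ.sup' univ_nonempty (fun t => W t - V t) with hm
  have hmle : ∀ t, W t - V t ≤ m := fun t => Finset.le_sup' (fun t => W t - V t) (mem_univ t)
  have hQ : ∀ t a1 a2, Qf R P γ W t a1 a2 ≤ Qf R P γ V t a1 a2 + γ * m := by
    intro t a1 a2
    have h1' : ∑ s', P t a1 a2 s' * W s' ≤ ∑ s', P t a1 a2 s' * V s' + m := by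
      have h2' : ∑ s', P t a1 a2 s' * W s'
          ≤ ∑ s', P t a1 a2 s' * V s' + ∑ s', P t a1 a2 s' * m := by
        rw [← Finset.sum_add_distrib]
        refine Finset.sum_le_sum fun s' _ => ?_
        have := hmle s'
        nlinarith [hP.1 t a1 a2 s']
      rw [← Finset.sum_mul, hP.2 t a1 a2, one_mul] at h2'
      exact h2'
    simp only [Qf]
    nlinarith
  have key : ∀ t, W t ≤ (∑ a1, ∑ a2, π1 t a1 * π2' t a2 * Qf R P γ V t a1 a2) + γ * m := by
    intro t
    rw [hWB t]
    have hsum : ∑ a1, ∑ a2, π1 t a1 * π2' t a2 * Qf R P γ W t a1 a2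
        ≤ ∑ a1, ∑ a2, π1 t a1 * π2' t a2 * (Qf R P γ V t a1 a2 + γ * m) := by
      refine Finset.sum_le_sum fun a1 _ => Finset.sum_le_sum fun a2 _ => ?_
      have h0 : 0 ≤ π1 t a1 * π2' t a2 := mul_nonneg (h1.1 t a1) (hpol'.1 t a2)
      have := hQ t a1 a2
      nlinarith
    have hexp : ∑ a1, ∑ a2, π1 t a1 * π2' t a2 * (Qf R P γ V t a1 a2 + γ * m)
        = (∑ a1, ∑ a2, π1 t a1 * π2' t a2 * Qf R P γ V t a1 a2) + γ * m := by
      simp only [mul_add, Finset.sum_add_distrib]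
      rw [show ∑ a1, ∑ a2, π1 t a1 * π2' t a2 * (γ * m)
          = (∑ a1, ∑ a2, π1 t a1 * π2' t a2) * (γ * m) by
        simp [Finset.sum_mul]]
      rw [wsum_one π1 π2' h1 hpol' t, one_mul]
    linarith [hsum, hexp.le]
  have hπs : ∀ a, π2' s a = q a := fun a => by simp [hπ2']
  have keyV : ∀ t, W t ≤ V t + γ * m := by
    intro t
    by_cases hts : t = s
    · subst hts
      have hk := key t
      have heq : ∑ a1, ∑ a2, π1 t a1 * π2' t a2 * Qf R P γ V t a1 a2
          = ∑ a1, ∑ a2, π1 t a1 * q a2 * Qf R P γ V t a1 a2 := by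
        refine Finset.sum_congr rfl fun a1 _ => Finset.sum_congr rfl fun a2 _ => ?_
        rw [hπs a2]
      rw [heq] at hk
      linarith [hcon]
    · have hk := key t
      have heq : ∑ a1, ∑ a2, π1 t a1 * π2' t a2 * Qf R P γ V t a1 a2
          = ∑ a1, ∑ a2, π1 t a1 * π2 t a2 * Qf R P γ V t a1 a2 := by
        refine Finset.sum_congr rfl fun a1 _ => Finset.sum_congr rfl fun a2 _ => ?_
        simp [hπ2', hts]
      rw [heq, ← hVB t] at hk
      exact hk
  have hm0 : m ≤ 0 := by
    have := keyV t0
    have h1' : m = W t0 - V t0 := ht0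
    nlinarith
  have hfin := key s
  have heq : ∑ a1, ∑ a2, π1 s a1 * π2' s a2 * Qf R P γ V s a1 a2
      = ∑ a1, ∑ a2, π1 s a1 * q a2 * Qf R P γ V s a1 a2 := by
    refine Finset.sum_congr rfl fun a1 _ => Finset.sum_congr rfl fun a2 _ => ?_
    rw [hπs a2]
  rw [heq] at hfin
  have := hWV s
  nlinarith

end Aux2
section Aux3

open Finset

private lemma PA_kernel {S SA A1 A2 : Type*} [Fintype S] [Fintype SA] [DecidableEq SA]
    (P : S → A1 → A2 → S → ℝ) (hP : IsKernel P)
    (φ : S → SA) (w : S → ℝ) (hw : IsAggWeight φ w) :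
    IsKernel (PA P φ w) := by
  constructor
  · intro sA a1 a2 sA'
    refine Finset.sum_nonneg fun s _ => Finset.sum_nonneg fun s' _ =>
      mul_nonneg (hP.1 s a1 a2 s') (hw.1 s).1
  · intro sA a1 a2
    unfold PA
    rw [Finset.sum_comm]
    calc ∑ s ∈ univ.filter (fun s => φ s = sA), ∑ sA' : SA,
          ∑ s' ∈ univ.filter (fun s' => φ s' = sA'), P s a1 a2 s' * w s
        = ∑ s ∈ univ.filter (fun s => φ s = sA), ∑ s', P s a1 a2 s' * w s := by
          refine Finset.sum_congr rfl fun s _ => ?_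
          exact Finset.sum_fiberwise univ φ (fun s' => P s a1 a2 s' * w s)
      _ = ∑ s ∈ univ.filter (fun s => φ s = sA), w s := by
          refine Finset.sum_congr rfl fun s _ => ?_
          rw [← Finset.sum_mul, hP.2 s a1 a2, one_mul]
      _ = 1 := hw.2 sA

private lemma QA_expand {S SA A1 A2 : Type*} [Fintype S] [Fintype SA] [DecidableEq SA]
    (R : S → A1 → A2 → ℝ) (P : S → A1 → A2 → S → ℝ) (γ : ℝ)
    (φ : S → SA) (w : S → ℝ) (VA : SA → ℝ) (sA : SA) (a1 : A1) (a2 : A2) :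
    Qf (RA R φ w) (PA P φ w) γ VA sA a1 a2
      = ∑ g ∈ univ.filter (fun g => φ g = sA),
          w g * (R g a1 a2 + γ * ∑ s', P g a1 a2 s' * VA (φ s')) := by
  unfold Qf RA PA
  have h1 : ∑ sA' : SA, (∑ g ∈ univ.filter (fun g => φ g = sA),
        ∑ s' ∈ univ.filter (fun s' => φ s' = sA'), P g a1 a2 s' * w g) * VA sA'
      = ∑ g ∈ univ.filter (fun g => φ g = sA),
        ∑ s', P g a1 a2 s' * w g * VA (φ s') := by
    calc ∑ sA' : SA, (∑ g ∈ univ.filter (fun g => φ g = sA),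
          ∑ s' ∈ univ.filter (fun s' => φ s' = sA'), P g a1 a2 s' * w g) * VA sA'
        = ∑ sA' : SA, ∑ g ∈ univ.filter (fun g => φ g = sA),
            ∑ s' ∈ univ.filter (fun s' => φ s' = sA'), P g a1 a2 s' * w g * VA sA' := by
          simp [Finset.sum_mul]
      _ = ∑ g ∈ univ.filter (fun g => φ g = sA), ∑ sA' : SA,
            ∑ s' ∈ univ.filter (fun s' => φ s' = sA'), P g a1 a2 s' * w g * VA sA' := by
          rw [Finset.sum_comm]
      _ = ∑ g ∈ univ.filter (fun g => φ g = sA), ∑ sA' : SA,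
            ∑ s' ∈ univ.filter (fun s' => φ s' = sA'), P g a1 a2 s' * w g * VA (φ s') := by
          refine Finset.sum_congr rfl fun g _ => Finset.sum_congr rfl fun sA' _ => ?_
          refine Finset.sum_congr rfl fun s' hs' => ?_
          rw [(Finset.mem_filter.mp hs').2]
      _ = ∑ g ∈ univ.filter (fun g => φ g = sA),
            ∑ s', P g a1 a2 s' * w g * VA (φ s') := by
          refine Finset.sum_congr rfl fun g _ => ?_
          exact Finset.sum_fiberwise univ φ (fun s' => P g a1 a2 s' * w g * VA (φ s'))
  rw [h1, Finset.mul_sum, ← Finset.sum_add_distrib]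
  refine Finset.sum_congr rfl fun g _ => ?_
  have h2 : ∑ s', P g a1 a2 s' * w g * VA (φ s')
      = w g * ∑ s', P g a1 a2 s' * VA (φ s') := by
    rw [Finset.mul_sum]
    exact Finset.sum_congr rfl fun s' _ => by ring
  rw [h2]
  ring

end Aux3
theorem abstract_value_close_to_ground_minimax_value
    {S SA A1 A2 : Type*}
    [Fintype S] [Nonempty S] [Fintype SA] [DecidableEq SA]
    [Fintype A1] [Nonempty A1] [Fintype A2] [Nonempty A2]
    (P : S → A1 → A2 → S → ℝ) (R : S → A1 → A2 → ℝ) (γ : ℝ)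
    (hP : IsKernel P) (hR : IsReward R) (hγ0 : 0 ≤ γ) (hγ1 : γ < 1)
    (Val : (S → A1 → ℝ) → (S → A2 → ℝ) → S → ℝ)
    (hVal : IsValueOperator R P γ Val)
    (φ : S → SA) (hφ : Function.Surjective φ)
    (w : S → ℝ) (hw : IsAggWeight φ w)
    (ValA : (SA → A1 → ℝ) → (SA → A2 → ℝ) → SA → ℝ)
    (hValA : IsValueOperator (RA R φ w) (PA P φ w) γ ValA)
    (πA1 : SA → A1 → ℝ) (πA2 : SA → A2 → ℝ)
    (hNashA : IsNash ValA πA1 πA2)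
    (π1s : S → A1 → ℝ) (π2s : S → A2 → ℝ)
    (hNash : IsNash Val π1s π2s)
    (ε : ℝ) (hε : 0 ≤ ε)
    (hagg : ∀ s1 s2 : S, φ s1 = φ s2 → ∀ (a1 : A1) (a2 : A2),
      |Qf R P γ (Val π1s π2s) s1 a1 a2 - Qf R P γ (Val π1s π2s) s2 a1 a2| ≤ ε)
    :
    ∀ s : S, |Val π1s π2s s - ValA πA1 πA2 (φ s)| ≤ ε / (1 - γ) := by
  classical
  obtain ⟨hπ1s, hπ2s, hNashG⟩ := hNash
  obtain ⟨hπA1, hπA2, hNashAb⟩ := hNashA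
  haveI hSA : Nonempty SA := ⟨φ (Classical.arbitrary S)⟩
  have hPA := PA_kernel P hP φ w hw
  set V : S → ℝ := Val π1s π2s with hV
  set VA : SA → ℝ := ValA πA1 πA2 with hVA
  set D := univ.sup' (univ_nonempty (α := S)) (fun s => |V s - VA (φ s)|) with hD
  have hDle : ∀ s, |V s - VA (φ s)| ≤ D := fun s =>
    Finset.le_sup' (fun s => |V s - VA (φ s)|) (mem_univ s)
  have hQbound : ∀ s a1 a2,
      |Qf R P γ V s a1 a2 - Qf (RA R φ w) (PA P φ w) γ VA (φ s) a1 a2| ≤ ε + γ * D := by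
    intro s a1 a2
    rw [QA_expand]
    have hdiff : Qf R P γ V s a1 a2
        - ∑ g ∈ univ.filter (fun g => φ g = φ s),
            w g * (R g a1 a2 + γ * ∑ s', P g a1 a2 s' * VA (φ s'))
        = ∑ g ∈ univ.filter (fun g => φ g = φ s),
            w g * (Qf R P γ V s a1 a2
              - (R g a1 a2 + γ * ∑ s', P g a1 a2 s' * VA (φ s'))) := by
      simp only [mul_sub, Finset.sum_sub_distrib]
      rw [← Finset.sum_mul, hw.2 (φ s), one_mul]
    rw [hdiff]
    refine abs_combo _ (fun g => w g) _ (fun g _ => (hw.1 g).1) (hw.2 (φ s)) ?_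
    intro g hg
    have hφg : φ g = φ s := (Finset.mem_filter.mp hg).2
    have h1 : |Qf R P γ V s a1 a2 - Qf R P γ V g a1 a2| ≤ ε := hagg s g hφg.symm a1 a2
    have h2 : |Qf R P γ V g a1 a2
        - (R g a1 a2 + γ * ∑ s', P g a1 a2 s' * VA (φ s'))| ≤ γ * D := by
      have heq : Qf R P γ V g a1 a2
          - (R g a1 a2 + γ * ∑ s', P g a1 a2 s' * VA (φ s'))
          = γ * ∑ s', P g a1 a2 s' * (V s' - VA (φ s')) := by
        simp only [Qf, mul_sub, Finset.sum_sub_distrib]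
        ring
      rw [heq, abs_mul, abs_of_nonneg hγ0]
      refine mul_le_mul_of_nonneg_left ?_ hγ0
      exact abs_combo univ (P g a1 a2) _ (fun i _ => hP.1 g a1 a2 i) (hP.2 g a1 a2)
        (fun i _ => hDle i)
    calc |Qf R P γ V s a1 a2 - (R g a1 a2 + γ * ∑ s', P g a1 a2 s' * VA (φ s'))|
        ≤ |Qf R P γ V s a1 a2 - Qf R P γ V g a1 a2|
          + |Qf R P γ V g a1 a2
            - (R g a1 a2 + γ * ∑ s', P g a1 a2 s' * VA (φ s'))| := abs_sub_le _ _ _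
      _ ≤ ε + γ * D := add_le_add h1 h2
  have hNG1 : ∀ π1', IsPolicy π1' → ∀ t, Val π1' π2s t ≤ V t :=
    fun π1' hp t => (hNashG t π1' π2s hp hπ2s).2
  have hNG2 : ∀ π2', IsPolicy π2' → ∀ t, V t ≤ Val π1s π2' t :=
    fun π2' hp t => (hNashG t π1s π2' hπ1s hp).1
  have hNA1 : ∀ π1', IsPolicy π1' → ∀ t, ValA π1' πA2 t ≤ VA t :=
    fun π1' hp t => (hNashAb t π1' πA2 hp hπA2).2
  have hNA2 : ∀ π2', IsPolicy π2' → ∀ t, VA t ≤ ValA πA1 π2' t :=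
    fun π2' hp t => (hNashAb t πA1 π2' hπA1 hp).1
  have hstep : ∀ s, |V s - VA (φ s)| ≤ ε + γ * D := by
    intro s
    have hu1 : V s ≤ ∑ a1, ∑ a2, π1s s a1 * πA2 (φ s) a2 * Qf R P γ V s a1 a2 :=
      deviation2 R P γ hP hγ0 hγ1 Val hVal π1s π2s hπ1s hπ2s hNG2 s (πA2 (φ s))
        (fun a => hπA2.1 (φ s) a) (hπA2.2 (φ s))
    have hu2 : ∑ a1, ∑ a2, π1s s a1 * πA2 (φ s) a2
          * Qf (RA R φ w) (PA P φ w) γ VA (φ s) a1 a2 ≤ VA (φ s) :=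
      deviation1 (RA R φ w) (PA P φ w) γ hPA hγ0 hγ1 ValA hValA πA1 πA2 hπA1 hπA2 hNA1
        (φ s) (π1s s) (fun a => hπ1s.1 s a) (hπ1s.2 s)
    have habs1 : |∑ a1, ∑ a2, π1s s a1 * πA2 (φ s) a2
          * (Qf R P γ V s a1 a2 - Qf (RA R φ w) (PA P φ w) γ VA (φ s) a1 a2)|
        ≤ ε + γ * D :=
      abs_combo2 (π1s s) (πA2 (φ s)) (fun a => hπ1s.1 s a) (fun a => hπA2.1 (φ s) a)
        (hπ1s.2 s) (hπA2.2 (φ s)) _ (fun a1 a2 => hQbound s a1 a2)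
    have hsplit1 : ∑ a1, ∑ a2, π1s s a1 * πA2 (φ s) a2
          * (Qf R P γ V s a1 a2 - Qf (RA R φ w) (PA P φ w) γ VA (φ s) a1 a2)
        = (∑ a1, ∑ a2, π1s s a1 * πA2 (φ s) a2 * Qf R P γ V s a1 a2)
          - ∑ a1, ∑ a2, π1s s a1 * πA2 (φ s) a2
            * Qf (RA R φ w) (PA P φ w) γ VA (φ s) a1 a2 := by
      simp [mul_sub, Finset.sum_sub_distrib]
    have up : V s - VA (φ s) ≤ ε + γ * D := by
      have h := (abs_le.mp habs1).2
      rw [hsplit1] at h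
      linarith
    have hl1 : VA (φ s) ≤ ∑ a1, ∑ a2, πA1 (φ s) a1 * π2s s a2
          * Qf (RA R φ w) (PA P φ w) γ VA (φ s) a1 a2 :=
      deviation2 (RA R φ w) (PA P φ w) γ hPA hγ0 hγ1 ValA hValA πA1 πA2 hπA1 hπA2 hNA2
        (φ s) (π2s s) (fun a => hπ2s.1 s a) (hπ2s.2 s)
    have hl2 : ∑ a1, ∑ a2, πA1 (φ s) a1 * π2s s a2 * Qf R P γ V s a1 a2 ≤ V s :=
      deviation1 R P γ hP hγ0 hγ1 Val hVal π1s π2s hπ1s hπ2s hNG1 s (πA1 (φ s))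
        (fun a => hπA1.1 (φ s) a) (hπA1.2 (φ s))
    have habs2 : |∑ a1, ∑ a2, πA1 (φ s) a1 * π2s s a2
          * (Qf R P γ V s a1 a2 - Qf (RA R φ w) (PA P φ w) γ VA (φ s) a1 a2)|
        ≤ ε + γ * D :=
      abs_combo2 (πA1 (φ s)) (π2s s) (fun a => hπA1.1 (φ s) a) (fun a => hπ2s.1 s a)
        (hπA1.2 (φ s)) (hπ2s.2 s) _ (fun a1 a2 => hQbound s a1 a2)
    have hsplit2 : ∑ a1, ∑ a2, πA1 (φ s) a1 * π2s s a2
          * (Qf R P γ V s a1 a2 - Qf (RA R φ w) (PA P φ w) γ VA (φ s) a1 a2)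
        = (∑ a1, ∑ a2, πA1 (φ s) a1 * π2s s a2 * Qf R P γ V s a1 a2)
          - ∑ a1, ∑ a2, πA1 (φ s) a1 * π2s s a2
            * Qf (RA R φ w) (PA P φ w) γ VA (φ s) a1 a2 := by
      simp [mul_sub, Finset.sum_sub_distrib]
    have lo : -(ε + γ * D) ≤ V s - VA (φ s) := by
      have h := (abs_le.mp habs2).1
      rw [hsplit2] at h
      linarith
    exact abs_le.mpr ⟨lo, up⟩
  have hDb : D ≤ ε + γ * D := by
    obtain ⟨s0, _, hs0⟩ := Finset.exists_mem_eq_sup' (univ_nonempty (α := S))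
      (fun s => |V s - VA (φ s)|)
    have h1 := hstep s0
    rw [← hs0] at h1
    exact h1
  have hDfin : D ≤ ε / (1 - γ) := by
    rw [le_div_iff₀ (by linarith)]
    nlinarith
  intro s
  exact (hDle s).trans hDfin
end

section
/- Suppose the aggregation map φ satisfies: φ(s1) = φ(s2) implies |Q*(s1, a) − Q*(s2, a)| ≤ ε for all a ∈ A1×A2, for some ε ≥ 0. Then for every s ∈ S and every a ∈ A1×A2, |Q_A^{π_A*}(φ(s), a) − Q^{π1†, π_GA,2*}(s, a)| ≤ 3ε/(1−γ)². -/
open Finset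

namespace MGaux
open Finset

lemma avg_le {A : Type*} (t : Finset A) {p f : A → ℝ} {c : ℝ}
    (h0 : ∀ a ∈ t, 0 ≤ p a) (h1 : ∑ a ∈ t, p a = 1) (hf : ∀ a ∈ t, f a ≤ c) :
    ∑ a ∈ t, p a * f a ≤ c := by
  calc ∑ a ∈ t, p a * f a ≤ ∑ a ∈ t, p a * c :=
        Finset.sum_le_sum fun a ha => mul_le_mul_of_nonneg_left (hf a ha) (h0 a ha)
  _ = c := by rw [← Finset.sum_mul, h1, one_mul]

lemma le_avg {A : Type*} (t : Finset A) {p f : A → ℝ} {c : ℝ}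
    (h0 : ∀ a ∈ t, 0 ≤ p a) (h1 : ∑ a ∈ t, p a = 1) (hf : ∀ a ∈ t, c ≤ f a) :
    c ≤ ∑ a ∈ t, p a * f a := by
  calc c = ∑ a ∈ t, p a * c := by rw [← Finset.sum_mul, h1, one_mul]
  _ ≤ ∑ a ∈ t, p a * f a :=
        Finset.sum_le_sum fun a ha => mul_le_mul_of_nonneg_left (hf a ha) (h0 a ha)

lemma avg_abs_le {A : Type*} (t : Finset A) {p f : A → ℝ} {c : ℝ}
    (h0 : ∀ a ∈ t, 0 ≤ p a) (h1 : ∑ a ∈ t, p a = 1) (hf : ∀ a ∈ t, |f a| ≤ c) :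
    |∑ a ∈ t, p a * f a| ≤ c := by
  refine abs_le.2 ⟨?_, ?_⟩
  · exact le_avg t h0 h1 fun a ha => neg_le_of_abs_le (hf a ha)
  · exact avg_le t h0 h1 fun a ha => le_of_abs_le (hf a ha)

lemma avg_le' {A : Type*} [Fintype A] {p f : A → ℝ} {c : ℝ}
    (h0 : ∀ a, 0 ≤ p a) (h1 : ∑ a, p a = 1) (hf : ∀ a, f a ≤ c) :
    ∑ a, p a * f a ≤ c :=
  avg_le univ (fun a _ => h0 a) h1 (fun a _ => hf a)

lemma le_avg' {A : Type*} [Fintype A] {p f : A → ℝ} {c : ℝ}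
    (h0 : ∀ a, 0 ≤ p a) (h1 : ∑ a, p a = 1) (hf : ∀ a, c ≤ f a) :
    c ≤ ∑ a, p a * f a :=
  le_avg univ (fun a _ => h0 a) h1 (fun a _ => hf a)

lemma avg_abs_le' {A : Type*} [Fintype A] {p f : A → ℝ} {c : ℝ}
    (h0 : ∀ a, 0 ≤ p a) (h1 : ∑ a, p a = 1) (hf : ∀ a, |f a| ≤ c) :
    |∑ a, p a * f a| ≤ c :=
  avg_abs_le univ (fun a _ => h0 a) h1 (fun a _ => hf a)

lemma double_sum_eq {A1 A2 : Type*} [Fintype A1] [Fintype A2]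
    (π1 : A1 → ℝ) (π2 : A2 → ℝ) (f : A1 → A2 → ℝ) :
    ∑ a1, ∑ a2, π1 a1 * π2 a2 * f a1 a2 = ∑ a1, π1 a1 * ∑ a2, π2 a2 * f a1 a2 := by
  simp [Finset.mul_sum, mul_assoc]

lemma swap_avg {A1 A2 : Type*} [Fintype A1] [Fintype A2]
    (p : A1 → ℝ) (q : A2 → ℝ) (f : A1 → A2 → ℝ) :
    ∑ a2, q a2 * ∑ a1, p a1 * f a1 a2 = ∑ a1, p a1 * ∑ a2, q a2 * f a1 a2 := by
  simp only [Finset.mul_sum]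
  rw [Finset.sum_comm]
  exact Finset.sum_congr rfl fun a1 _ => Finset.sum_congr rfl fun a2 _ => by ring

lemma Qf_mono {S A1 A2 : Type*} [Fintype S] {R : S → A1 → A2 → ℝ}
    {P : S → A1 → A2 → S → ℝ} {γ : ℝ} (hP : IsKernel P) (hγ0 : 0 ≤ γ)
    {V V' : S → ℝ} (h : ∀ s, V s ≤ V' s) (s : S) (a1 : A1) (a2 : A2) :
    Qf R P γ V s a1 a2 ≤ Qf R P γ V' s a1 a2 := by
  unfold Qf
  have : ∑ s', P s a1 a2 s' * V s' ≤ ∑ s', P s a1 a2 s' * V' s' :=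
    Finset.sum_le_sum fun s' _ => mul_le_mul_of_nonneg_left (h s') (hP.1 s a1 a2 s')
  nlinarith

lemma Qf_diff {S A1 A2 : Type*} [Fintype S] (R : S → A1 → A2 → ℝ)
    (P : S → A1 → A2 → S → ℝ) (γ : ℝ) (V V' : S → ℝ) (s : S) (a1 : A1) (a2 : A2) :
    Qf R P γ V s a1 a2 - Qf R P γ V' s a1 a2 = γ * ∑ s', P s a1 a2 s' * (V s' - V' s') := by
  simp only [Qf, mul_sub, Finset.sum_sub_distrib]
  ring

lemma Qf_abs_diff_le {S A1 A2 : Type*} [Fintype S] {R : S → A1 → A2 → ℝ}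
    {P : S → A1 → A2 → S → ℝ} {γ : ℝ} (hP : IsKernel P) (hγ0 : 0 ≤ γ)
    {V V' : S → ℝ} {c : ℝ} (h : ∀ s, |V s - V' s| ≤ c) (s : S) (a1 : A1) (a2 : A2) :
    |Qf R P γ V s a1 a2 - Qf R P γ V' s a1 a2| ≤ γ * c := by
  rw [Qf_diff, abs_mul, abs_of_nonneg hγ0]
  exact mul_le_mul_of_nonneg_left (avg_abs_le' (hP.1 s a1 a2) (hP.2 s a1 a2) h) hγ0

lemma Qf_add_const {S A1 A2 : Type*} [Fintype S] {R : S → A1 → A2 → ℝ}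
    {P : S → A1 → A2 → S → ℝ} {γ : ℝ} (hP : IsKernel P) (V : S → ℝ) (c : ℝ)
    (s : S) (a1 : A1) (a2 : A2) :
    Qf R P γ (fun s' => V s' + c) s a1 a2 = Qf R P γ V s a1 a2 + γ * c := by
  simp only [Qf, mul_add, Finset.sum_add_distrib, ← Finset.sum_mul, hP.2 s a1 a2]
  ring

lemma sub_fixed_le {S A1 A2 : Type*} [Fintype S] [Nonempty S] [Fintype A1] [Fintype A2]
    {R : S → A1 → A2 → ℝ} {P : S → A1 → A2 → S → ℝ} {γ : ℝ}
    (hP : IsKernel P) (hγ0 : 0 ≤ γ) (hγ1 : γ < 1)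
    {π1 : S → A1 → ℝ} {π2 : S → A2 → ℝ} {V W : S → ℝ}
    (hπ1 : IsPolicy π1) (hπ2 : IsPolicy π2)
    (hV : IsValue R P γ π1 π2 V)
    (hW : ∀ s, W s ≤ ∑ a1, ∑ a2, π1 s a1 * π2 s a2 * Qf R P γ W s a1 a2) :
    ∀ s, W s ≤ V s := by
  obtain ⟨s0, -, hs0⟩ := Finset.exists_max_image (univ : Finset S)
    (fun s => W s - V s) univ_nonempty
  set M := W s0 - V s0 with hM
  have key : M ≤ γ * M := by
    have h1 : W s0 - V s0 ≤
        ∑ a1, ∑ a2, π1 s0 a1 * π2 s0 a2 *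
          (Qf R P γ W s0 a1 a2 - Qf R P γ V s0 a1 a2) := by
      have := hW s0
      have h2 := hV s0
      simp only [mul_sub, Finset.sum_sub_distrib]
      linarith
    have h3 : ∑ a1, ∑ a2, π1 s0 a1 * π2 s0 a2 *
        (Qf R P γ W s0 a1 a2 - Qf R P γ V s0 a1 a2) ≤ γ * M := by
      rw [double_sum_eq]
      refine avg_le' (hπ1.1 s0) (hπ1.2 s0) fun a1 => ?_
      refine avg_le' (hπ2.1 s0) (hπ2.2 s0) fun a2 => ?_
      rw [Qf_diff]
      refine mul_le_mul_of_nonneg_left ?_ hγ0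
      exact avg_le' (hP.1 s0 a1 a2) (hP.2 s0 a1 a2) fun s' => hs0 s' (mem_univ s')
    linarith
  have hM0 : M ≤ 0 := by nlinarith
  intro s
  have := hs0 s (mem_univ s)
  linarith

lemma sup_fixed_ge {S A1 A2 : Type*} [Fintype S] [Nonempty S] [Fintype A1] [Fintype A2]
    {R : S → A1 → A2 → ℝ} {P : S → A1 → A2 → S → ℝ} {γ : ℝ}
    (hP : IsKernel P) (hγ0 : 0 ≤ γ) (hγ1 : γ < 1)
    {π1 : S → A1 → ℝ} {π2 : S → A2 → ℝ} {V W : S → ℝ}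
    (hπ1 : IsPolicy π1) (hπ2 : IsPolicy π2)
    (hV : IsValue R P γ π1 π2 V)
    (hW : ∀ s, ∑ a1, ∑ a2, π1 s a1 * π2 s a2 * Qf R P γ W s a1 a2 ≤ W s) :
    ∀ s, V s ≤ W s := by
  obtain ⟨s0, -, hs0⟩ := Finset.exists_max_image (univ : Finset S)
    (fun s => V s - W s) univ_nonempty
  set M := V s0 - W s0 with hM
  have key : M ≤ γ * M := by
    have h1 : V s0 - W s0 ≤
        ∑ a1, ∑ a2, π1 s0 a1 * π2 s0 a2 *
          (Qf R P γ V s0 a1 a2 - Qf R P γ W s0 a1 a2) := by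
      have := hW s0
      have h2 := hV s0
      simp only [mul_sub, Finset.sum_sub_distrib]
      linarith
    have h3 : ∑ a1, ∑ a2, π1 s0 a1 * π2 s0 a2 *
        (Qf R P γ V s0 a1 a2 - Qf R P γ W s0 a1 a2) ≤ γ * M := by
      rw [double_sum_eq]
      refine avg_le' (hπ1.1 s0) (hπ1.2 s0) fun a1 => ?_
      refine avg_le' (hπ2.1 s0) (hπ2.2 s0) fun a2 => ?_
      rw [Qf_diff]
      refine mul_le_mul_of_nonneg_left ?_ hγ0
      exact avg_le' (hP.1 s0 a1 a2) (hP.2 s0 a1 a2) fun s' => hs0 s' (mem_univ s')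
    linarith
  have hM0 : M ≤ 0 := by nlinarith
  intro s
  have := hs0 s (mem_univ s)
  linarith

open Classical in
lemma nash_row_le {S A1 A2 : Type*} [Fintype S] [Nonempty S] [Fintype A1] [Fintype A2]
    {R : S → A1 → A2 → ℝ} {P : S → A1 → A2 → S → ℝ} {γ : ℝ}
    (hP : IsKernel P) (hγ0 : 0 ≤ γ) (hγ1 : γ < 1)
    {Val : (S → A1 → ℝ) → (S → A2 → ℝ) → S → ℝ}
    (hVal : IsValueOperator R P γ Val)
    {π1 : S → A1 → ℝ} {π2 : S → A2 → ℝ} (hNash : IsNash Val π1 π2) :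
    ∀ s a1, ∑ a2, π2 s a2 * Qf R P γ (Val π1 π2) s a1 a2 ≤ Val π1 π2 s := by
  by_contra hcon
  push_neg at hcon
  obtain ⟨s0, a1, hlt⟩ := hcon
  set V := Val π1 π2 with hVdef
  set π1' : S → A1 → ℝ := fun s a => if s = s0 then (if a = a1 then 1 else 0) else π1 s a
    with hπ1'def
  have hπ1' : IsPolicy π1' := by
    constructor
    · intro s a
      simp only [π1']
      split_ifs
      · norm_num
      · norm_num
      · exact hNash.1.1 s a
    · intro s
      by_cases h : s = s0
      · simp [π1', h]
      · simpa [π1', h] using hNash.1.2 s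
  have hVb : ∀ s, V s = ∑ a1, ∑ a2, π1 s a1 * π2 s a2 * Qf R P γ V s a1 a2 :=
    hVal π1 π2 hNash.1 hNash.2.1
  have hV'b := hVal π1' π2 hπ1' hNash.2.1
  have hsum : ∀ (U : S → ℝ),
      ∑ b1, ∑ a2, π1' s0 b1 * π2 s0 a2 * Qf R P γ U s0 b1 a2
        = ∑ a2, π2 s0 a2 * Qf R P γ U s0 a1 a2 := by
    intro U
    rw [Finset.sum_comm]
    simp [π1', ite_mul, one_mul, zero_mul, Finset.sum_ite_eq']
  have hWle : ∀ s, V s ≤ ∑ b1, ∑ a2, π1' s b1 * π2 s a2 * Qf R P γ V s b1 a2 := by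
    intro s
    by_cases h : s = s0
    · subst h
      rw [hsum]
      exact le_of_lt hlt
    · refine le_of_eq ?_
      rw [hVb s]
      refine Finset.sum_congr rfl fun b1 _ => Finset.sum_congr rfl fun a2 _ => ?_
      simp [π1', h]
  have hle : ∀ s, V s ≤ Val π1' π2 s :=
    sub_fixed_le hP hγ0 hγ1 hπ1' hNash.2.1 hV'b hWle
  have hmono : ∑ b1, ∑ a2, π1' s0 b1 * π2 s0 a2 * Qf R P γ V s0 b1 a2
      ≤ ∑ b1, ∑ a2, π1' s0 b1 * π2 s0 a2 * Qf R P γ (Val π1' π2) s0 b1 a2 := by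
    refine Finset.sum_le_sum fun b1 _ => Finset.sum_le_sum fun a2 _ => ?_
    exact mul_le_mul_of_nonneg_left (Qf_mono hP hγ0 hle s0 b1 a2)
      (mul_nonneg (hπ1'.1 s0 b1) (hNash.2.1.1 s0 a2))
  have hN := (hNash.2.2 s0 π1' π2 hπ1' hNash.2.1).2
  have hV'eq := hV'b s0
  have h1 := hsum V
  linarith [hlt]

open Classical in
lemma nash_col_ge {S A1 A2 : Type*} [Fintype S] [Nonempty S] [Fintype A1] [Fintype A2]
    {R : S → A1 → A2 → ℝ} {P : S → A1 → A2 → S → ℝ} {γ : ℝ}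
    (hP : IsKernel P) (hγ0 : 0 ≤ γ) (hγ1 : γ < 1)
    {Val : (S → A1 → ℝ) → (S → A2 → ℝ) → S → ℝ}
    (hVal : IsValueOperator R P γ Val)
    {π1 : S → A1 → ℝ} {π2 : S → A2 → ℝ} (hNash : IsNash Val π1 π2) :
    ∀ s a2, Val π1 π2 s ≤ ∑ a1, π1 s a1 * Qf R P γ (Val π1 π2) s a1 a2 := by
  by_contra hcon
  push_neg at hcon
  obtain ⟨s0, a2, hlt⟩ := hcon
  set V := Val π1 π2 with hVdef
  set π2' : S → A2 → ℝ := fun s a => if s = s0 then (if a = a2 then 1 else 0) else π2 s a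
    with hπ2'def
  have hπ2' : IsPolicy π2' := by
    constructor
    · intro s a
      simp only [π2']
      split_ifs
      · norm_num
      · norm_num
      · exact hNash.2.1.1 s a
    · intro s
      by_cases h : s = s0
      · simp [π2', h]
      · simpa [π2', h] using hNash.2.1.2 s
  have hVb : ∀ s, V s = ∑ a1, ∑ a2, π1 s a1 * π2 s a2 * Qf R P γ V s a1 a2 :=
    hVal π1 π2 hNash.1 hNash.2.1
  have hV'b := hVal π1 π2' hNash.1 hπ2'
  have hsum : ∀ (U : S → ℝ),
      ∑ a1, ∑ b2, π1 s0 a1 * π2' s0 b2 * Qf R P γ U s0 a1 b2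
        = ∑ a1, π1 s0 a1 * Qf R P γ U s0 a1 a2 := by
    intro U
    refine Finset.sum_congr rfl fun a1 _ => ?_
    simp [π2', mul_ite, ite_mul, one_mul, zero_mul, mul_one, Finset.sum_ite_eq']
  have hWge : ∀ s, ∑ a1, ∑ b2, π1 s a1 * π2' s b2 * Qf R P γ V s a1 b2 ≤ V s := by
    intro s
    by_cases h : s = s0
    · subst h
      rw [hsum]
      exact le_of_lt hlt
    · refine le_of_eq ?_
      conv_rhs => rw [hVb s]
      refine Finset.sum_congr rfl fun b1 _ => Finset.sum_congr rfl fun b2 _ => ?_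
      simp [π2', h]
  have hle : ∀ s, Val π1 π2' s ≤ V s :=
    sup_fixed_ge hP hγ0 hγ1 hNash.1 hπ2' hV'b hWge
  have hmono : ∑ a1, ∑ b2, π1 s0 a1 * π2' s0 b2 * Qf R P γ (Val π1 π2') s0 a1 b2
      ≤ ∑ a1, ∑ b2, π1 s0 a1 * π2' s0 b2 * Qf R P γ V s0 a1 b2 := by
    refine Finset.sum_le_sum fun b1 _ => Finset.sum_le_sum fun b2 _ => ?_
    exact mul_le_mul_of_nonneg_left (Qf_mono hP hγ0 hle s0 b1 b2)
      (mul_nonneg (hNash.1.1 s0 b1) (hπ2'.1 s0 b2))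
  have hN := (hNash.2.2 s0 π1 π2' hNash.1 hπ2').1
  have hV'eq := hV'b s0
  have h1 := hsum V
  linarith [hlt]

lemma PA_kernel {S SA A1 A2 : Type*} [Fintype S] [Fintype SA] [DecidableEq SA]
    {P : S → A1 → A2 → S → ℝ} {φ : S → SA} {w : S → ℝ}
    (hP : IsKernel P) (hw : IsAggWeight φ w) :
    IsKernel (PA P φ w) := by
  constructor
  · intro sA a1 a2 sA'
    refine Finset.sum_nonneg fun s _ => Finset.sum_nonneg fun s' _ => ?_
    exact mul_nonneg (hP.1 s a1 a2 s') (hw.1 s).1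
  · intro sA a1 a2
    unfold PA
    rw [Finset.sum_comm]
    calc ∑ s ∈ univ.filter (fun s => φ s = sA), ∑ sA' : SA,
          ∑ s' ∈ univ.filter (fun s' => φ s' = sA'), P s a1 a2 s' * w s
        = ∑ s ∈ univ.filter (fun s => φ s = sA), w s := by
          refine Finset.sum_congr rfl fun s _ => ?_
          rw [Finset.sum_fiberwise univ φ (fun s' => P s a1 a2 s' * w s)]
          rw [← Finset.sum_mul, hP.2 s a1 a2, one_mul]
      _ = 1 := hw.2 sA

lemma QA_rep {S SA A1 A2 : Type*} [Fintype S] [Fintype SA] [DecidableEq SA]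
    {P : S → A1 → A2 → S → ℝ} {R : S → A1 → A2 → ℝ} {γ : ℝ}
    {φ : S → SA} {w : S → ℝ}
    (VA : SA → ℝ) (sA : SA) (a1 : A1) (a2 : A2) :
    Qf (RA R φ w) (PA P φ w) γ VA sA a1 a2
      = ∑ s ∈ univ.filter (fun s => φ s = sA),
          w s * Qf R P γ (fun s' => VA (φ s')) s a1 a2 := by
  have hkey : ∀ s : S,
      ∑ sA' : SA, (∑ s' ∈ univ.filter (fun s' => φ s' = sA'), P s a1 a2 s' * w s) * VA sA'
        = w s * ∑ s', P s a1 a2 s' * VA (φ s') := by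
    intro s
    have h1 : ∀ sA' : SA,
        (∑ s' ∈ univ.filter (fun s' => φ s' = sA'), P s a1 a2 s' * w s) * VA sA'
          = ∑ s' ∈ univ.filter (fun s' => φ s' = sA'), w s * (P s a1 a2 s' * VA (φ s')) := by
      intro sA'
      rw [Finset.sum_mul]
      refine Finset.sum_congr rfl fun s' hs' => ?_
      have : φ s' = sA' := (Finset.mem_filter.1 hs').2
      rw [this]; ring
    rw [Finset.sum_congr rfl fun sA' _ => h1 sA',
      Finset.sum_fiberwise univ φ (fun s' => w s * (P s a1 a2 s' * VA (φ s'))),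
      ← Finset.mul_sum]
  have h2 : ∑ sA' : SA, PA P φ w sA a1 a2 sA' * VA sA'
      = ∑ s ∈ univ.filter (fun s => φ s = sA), w s * ∑ s', P s a1 a2 s' * VA (φ s') := by
    calc ∑ sA' : SA, PA P φ w sA a1 a2 sA' * VA sA'
        = ∑ sA' : SA, ∑ s ∈ univ.filter (fun s => φ s = sA),
            (∑ s' ∈ univ.filter (fun s' => φ s' = sA'), P s a1 a2 s' * w s) * VA sA' := by
          refine Finset.sum_congr rfl fun sA' _ => ?_
          simp only [PA, Finset.sum_mul]
      _ = ∑ s ∈ univ.filter (fun s => φ s = sA), ∑ sA' : SA,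
            (∑ s' ∈ univ.filter (fun s' => φ s' = sA'), P s a1 a2 s' * w s) * VA sA' :=
          Finset.sum_comm
      _ = ∑ s ∈ univ.filter (fun s => φ s = sA), w s * ∑ s', P s a1 a2 s' * VA (φ s') :=
          Finset.sum_congr rfl fun s _ => hkey s
  show RA R φ w sA a1 a2 + γ * ∑ sA' : SA, PA P φ w sA a1 a2 sA' * VA sA' = _
  rw [h2, RA, Finset.mul_sum, ← Finset.sum_add_distrib]
  exact Finset.sum_congr rfl fun s _ => by simp only [Qf]; ring

end MGaux

theorem abstract_Q_close_to_best_response_Q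
    {S SA A1 A2 : Type*}
    [Fintype S] [Nonempty S] [Fintype SA] [DecidableEq SA]
    [Fintype A1] [Nonempty A1] [Fintype A2] [Nonempty A2]
    (P : S → A1 → A2 → S → ℝ) (R : S → A1 → A2 → ℝ) (γ : ℝ)
    (hP : IsKernel P) (hR : IsReward R) (hγ0 : 0 ≤ γ) (hγ1 : γ < 1)
    (Val : (S → A1 → ℝ) → (S → A2 → ℝ) → S → ℝ)
    (hVal : IsValueOperator R P γ Val)
    (φ : S → SA) (hφ : Function.Surjective φ)
    (w : S → ℝ) (hw : IsAggWeight φ w)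
    (ValA : (SA → A1 → ℝ) → (SA → A2 → ℝ) → SA → ℝ)
    (hValA : IsValueOperator (RA R φ w) (PA P φ w) γ ValA)
    (πA1 : SA → A1 → ℝ) (πA2 : SA → A2 → ℝ)
    (hNashA : IsNash ValA πA1 πA2)
    (π1s : S → A1 → ℝ) (π2s : S → A2 → ℝ)
    (hNash : IsNash Val π1s π2s)
    (π1d : S → A1 → ℝ)
    (hBR : IsBestResponse1 Val π1d (fun s => πA2 (φ s)))
    (ε : ℝ) (hε : 0 ≤ ε)
    (hagg : ∀ s1 s2 : S, φ s1 = φ s2 → ∀ (a1 : A1) (a2 : A2),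
      |Qf R P γ (Val π1s π2s) s1 a1 a2 - Qf R P γ (Val π1s π2s) s2 a1 a2| ≤ ε)
    :
    ∀ (s : S) (a1 : A1) (a2 : A2),
      |Qf (RA R φ w) (PA P φ w) γ (ValA πA1 πA2) (φ s) a1 a2 - Qf R P γ (Val π1d (fun s => πA2 (φ s))) s a1 a2| ≤ 3 * ε / (1 - γ) ^ 2 := by
    classical
  haveI : Nonempty SA := ⟨φ (Classical.arbitrary S)⟩
  have hπ1s := hNash.1
  have hπ2s := hNash.2.1
  have hπA1 := hNashA.1
  have hπA2 := hNashA.2.1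
  have hπ1d := hBR.1
  have hBR2 := hBR.2
  set πG2 : S → A2 → ℝ := fun s => πA2 (φ s) with hπG2def
  have hπG2 : IsPolicy πG2 := ⟨fun s a => hπA2.1 (φ s) a, fun s => hπA2.2 (φ s)⟩
  set Vst : S → ℝ := Val π1s π2s with hVstdef
  set VA : SA → ℝ := ValA πA1 πA2 with hVAdef
  set Vd : S → ℝ := Val π1d πG2 with hVddef
  have hPA : IsKernel (PA P φ w) := MGaux.PA_kernel hP hw
  have hrow : ∀ s a1, ∑ a2, π2s s a2 * Qf R P γ Vst s a1 a2 ≤ Vst s :=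
    MGaux.nash_row_le hP hγ0 hγ1 hVal hNash
  have hcol : ∀ s a2, Vst s ≤ ∑ a1, π1s s a1 * Qf R P γ Vst s a1 a2 :=
    MGaux.nash_col_ge hP hγ0 hγ1 hVal hNash
  have hArow : ∀ sA a1, ∑ a2, πA2 sA a2 * Qf (RA R φ w) (PA P φ w) γ VA sA a1 a2 ≤ VA sA :=
    MGaux.nash_row_le hPA hγ0 hγ1 hValA hNashA
  have hAcol : ∀ sA a2, VA sA ≤ ∑ a1, πA1 sA a1 * Qf (RA R φ w) (PA P φ w) γ VA sA a1 a2 :=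
    MGaux.nash_col_ge hPA hγ0 hγ1 hValA hNashA
  have h1γ : (0:ℝ) < 1 - γ := by linarith
  -- the maximal gap between abstract and ground Q values
  obtain ⟨⟨sm, am1, am2⟩, -, hEm⟩ := Finset.exists_max_image (univ : Finset (S × A1 × A2))
    (fun x => |Qf (RA R φ w) (PA P φ w) γ VA (φ x.1) x.2.1 x.2.2 - Qf R P γ Vst x.1 x.2.1 x.2.2|)
    univ_nonempty
  set E : ℝ := |Qf (RA R φ w) (PA P φ w) γ VA (φ sm) am1 am2 - Qf R P γ Vst sm am1 am2| with hEdef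
  have hE0 : 0 ≤ E := abs_nonneg _
  have hEb : ∀ s a1 a2, |Qf (RA R φ w) (PA P φ w) γ VA (φ s) a1 a2 - Qf R P γ Vst s a1 a2| ≤ E :=
    fun s a1 a2 => hEm (s, a1, a2) (mem_univ _)
  -- values are within E
  have hD : ∀ s, |VA (φ s) - Vst s| ≤ E := by
    intro s
    have hVAs : VA (φ s) = ∑ a1, ∑ a2, πA1 (φ s) a1 * πA2 (φ s) a2 *
        Qf (RA R φ w) (PA P φ w) γ VA (φ s) a1 a2 := hValA πA1 πA2 hπA1 hπA2 (φ s)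
    rw [abs_le]
    constructor
    · -- Vst s - E ≤ VA (φ s), i.e. Vst s ≤ VA (φ s) + E
      have h1 : Vst s ≤ ∑ a2, πA2 (φ s) a2 * ∑ a1, π1s s a1 * Qf R P γ Vst s a1 a2 :=
        MGaux.le_avg' (hπA2.1 (φ s)) (hπA2.2 (φ s)) fun a2 => hcol s a2
      rw [MGaux.swap_avg] at h1
      have h2 : ∑ a1, π1s s a1 * ∑ a2, πA2 (φ s) a2 * Qf R P γ Vst s a1 a2
          ≤ VA (φ s) + E := by
        refine MGaux.avg_le' (hπ1s.1 s) (hπ1s.2 s) fun a1 => ?_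
        have h3 : ∑ a2, πA2 (φ s) a2 * Qf R P γ Vst s a1 a2
            ≤ ∑ a2, πA2 (φ s) a2 * (Qf (RA R φ w) (PA P φ w) γ VA (φ s) a1 a2 + E) := by
          refine Finset.sum_le_sum fun a2 _ => mul_le_mul_of_nonneg_left ?_ (hπA2.1 (φ s) a2)
          have := abs_le.1 (hEb s a1 a2)
          linarith [this.1]
        have h4 : ∑ a2, πA2 (φ s) a2 * (Qf (RA R φ w) (PA P φ w) γ VA (φ s) a1 a2 + E)
            = (∑ a2, πA2 (φ s) a2 * Qf (RA R φ w) (PA P φ w) γ VA (φ s) a1 a2) + E := by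
          simp [mul_add, Finset.sum_add_distrib, ← Finset.sum_mul, hπA2.2 (φ s)]
        have h5 := hArow (φ s) a1
        linarith
      linarith
    · -- VA (φ s) - Vst s ≤ E
      have h1 : VA (φ s) ≤ ∑ a2, π2s s a2 * ∑ a1, πA1 (φ s) a1 *
          Qf (RA R φ w) (PA P φ w) γ VA (φ s) a1 a2 :=
        MGaux.le_avg' (hπ2s.1 s) (hπ2s.2 s) fun a2 => hAcol (φ s) a2
      rw [MGaux.swap_avg] at h1
      have h2 : ∑ a1, πA1 (φ s) a1 * ∑ a2, π2s s a2 *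
          Qf (RA R φ w) (PA P φ w) γ VA (φ s) a1 a2 ≤ Vst s + E := by
        refine MGaux.avg_le' (hπA1.1 (φ s)) (hπA1.2 (φ s)) fun a1 => ?_
        have h3 : ∑ a2, π2s s a2 * Qf (RA R φ w) (PA P φ w) γ VA (φ s) a1 a2
            ≤ ∑ a2, π2s s a2 * (Qf R P γ Vst s a1 a2 + E) := by
          refine Finset.sum_le_sum fun a2 _ => mul_le_mul_of_nonneg_left ?_ (hπ2s.1 s a2)
          have := abs_le.1 (hEb s a1 a2)
          linarith [this.2]
        have h4 : ∑ a2, π2s s a2 * (Qf R P γ Vst s a1 a2 + E)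
            = (∑ a2, π2s s a2 * Qf R P γ Vst s a1 a2) + E := by
          simp [mul_add, Finset.sum_add_distrib, ← Finset.sum_mul, hπ2s.2 s]
        have h5 := hrow s a1
        linarith
      linarith
  -- the recursive bound on E
  have hErec : ∀ s a1 a2,
      |Qf (RA R φ w) (PA P φ w) γ VA (φ s) a1 a2 - Qf R P γ Vst s a1 a2| ≤ γ * E + ε := by
    intro s a1 a2
    have hwsum := hw.2 (φ s)
    have hrepr : Qf (RA R φ w) (PA P φ w) γ VA (φ s) a1 a2 - Qf R P γ Vst s a1 a2
        = ∑ g ∈ univ.filter (fun g => φ g = φ s),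
            w g * (Qf R P γ (fun s' => VA (φ s')) g a1 a2 - Qf R P γ Vst s a1 a2) := by
      rw [MGaux.QA_rep VA (φ s) a1 a2]
      have hms : ∀ g ∈ univ.filter (fun g => φ g = φ s),
          w g * (Qf R P γ (fun s' => VA (φ s')) g a1 a2 - Qf R P γ Vst s a1 a2)
            = w g * Qf R P γ (fun s' => VA (φ s')) g a1 a2
              - w g * Qf R P γ Vst s a1 a2 := fun g _ => mul_sub _ _ _
      rw [Finset.sum_congr rfl hms, Finset.sum_sub_distrib, ← Finset.sum_mul, hwsum, one_mul]
    rw [hrepr]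
    refine MGaux.avg_abs_le _ (fun g _ => (hw.1 g).1) hwsum fun g hg => ?_
    have hφg : φ g = φ s := (Finset.mem_filter.1 hg).2
    have hb1 : |Qf R P γ (fun s' => VA (φ s')) g a1 a2 - Qf R P γ Vst g a1 a2| ≤ γ * E :=
      MGaux.Qf_abs_diff_le hP hγ0 hD g a1 a2
    have hb2 : |Qf R P γ Vst g a1 a2 - Qf R P γ Vst s a1 a2| ≤ ε := hagg g s hφg a1 a2
    calc |Qf R P γ (fun s' => VA (φ s')) g a1 a2 - Qf R P γ Vst s a1 a2|
        ≤ |Qf R P γ (fun s' => VA (φ s')) g a1 a2 - Qf R P γ Vst g a1 a2|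
          + |Qf R P γ Vst g a1 a2 - Qf R P γ Vst s a1 a2| := abs_sub_le _ _ _
      _ ≤ γ * E + ε := add_le_add hb1 hb2
  have hEε : E * (1 - γ) ≤ ε := by
    have := hErec sm am1 am2
    rw [← hEdef] at this
    nlinarith
  -- lower bound: Vst ≤ Vd
  have hVstLeVd : ∀ s, Vst s ≤ Vd s := by
    have hW : ∀ s, Vst s ≤ ∑ a1, ∑ a2, π1s s a1 * πG2 s a2 * Qf R P γ Vst s a1 a2 := by
      intro s
      rw [MGaux.double_sum_eq, ← MGaux.swap_avg]
      exact MGaux.le_avg' (hπG2.1 s) (hπG2.2 s) fun a2 => hcol s a2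
    have h1 : ∀ s, Vst s ≤ Val π1s πG2 s :=
      MGaux.sub_fixed_le hP hγ0 hγ1 hπ1s hπG2 (hVal π1s πG2 hπ1s hπG2) hW
    exact fun s => le_trans (h1 s) (hBR2 π1s hπ1s s)
  -- upper bound: Vd ≤ Vst + c
  set c : ℝ := 2 * E / (1 - γ) with hcdef
  have hc0 : 0 ≤ c := div_nonneg (by linarith) h1γ.le
  have hc2 : c * (1 - γ) = 2 * E := div_mul_cancel₀ _ (ne_of_gt h1γ)
  have hVdLe : ∀ s, Vd s ≤ Vst s + c := by
    have hWge : ∀ s, ∑ a1, ∑ a2, π1d s a1 * πG2 s a2 *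
        Qf R P γ (fun s' => Vst s' + c) s a1 a2 ≤ Vst s + c := by
      intro s
      have hq : ∀ a1 a2, Qf R P γ (fun s' => Vst s' + c) s a1 a2
          = Qf R P γ Vst s a1 a2 + γ * c := fun a1 a2 => MGaux.Qf_add_const hP Vst c s a1 a2
      have hmain : ∑ a1, ∑ a2, π1d s a1 * πG2 s a2 * Qf R P γ Vst s a1 a2
          ≤ Vst s + 2 * E := by
        rw [MGaux.double_sum_eq]
        refine MGaux.avg_le' (hπ1d.1 s) (hπ1d.2 s) fun a1 => ?_
        have h3 : ∑ a2, πG2 s a2 * Qf R P γ Vst s a1 a2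
            ≤ ∑ a2, πG2 s a2 * (Qf (RA R φ w) (PA P φ w) γ VA (φ s) a1 a2 + E) := by
          refine Finset.sum_le_sum fun a2 _ => mul_le_mul_of_nonneg_left ?_ (hπG2.1 s a2)
          have := abs_le.1 (hEb s a1 a2)
          linarith [this.1]
        have h4 : ∑ a2, πG2 s a2 * (Qf (RA R φ w) (PA P φ w) γ VA (φ s) a1 a2 + E)
            = (∑ a2, πA2 (φ s) a2 * Qf (RA R φ w) (PA P φ w) γ VA (φ s) a1 a2) + E := by
          simp [πG2, mul_add, Finset.sum_add_distrib, ← Finset.sum_mul, hπA2.2 (φ s)]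
        have h5 := hArow (φ s) a1
        have h6 := abs_le.1 (hD s)
        linarith
      have heq : ∑ a1, ∑ a2, π1d s a1 * πG2 s a2 * Qf R P γ (fun s' => Vst s' + c) s a1 a2
          = (∑ a1, ∑ a2, π1d s a1 * πG2 s a2 * Qf R P γ Vst s a1 a2) + γ * c := by
        rw [MGaux.double_sum_eq, MGaux.double_sum_eq]
        have : ∀ a1, ∑ a2, πG2 s a2 * Qf R P γ (fun s' => Vst s' + c) s a1 a2
            = (∑ a2, πG2 s a2 * Qf R P γ Vst s a1 a2) + γ * c := by
          intro a1
          rw [Finset.sum_congr rfl fun a2 _ => by rw [hq a1 a2]]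
          simp [mul_add, Finset.sum_add_distrib, ← Finset.sum_mul, hπG2.2 s]
        rw [Finset.sum_congr rfl fun a1 _ => by rw [this a1]]
        simp [mul_add, Finset.sum_add_distrib, ← Finset.sum_mul, hπ1d.2 s]
      rw [heq]
      nlinarith [hmain, hc2, mul_nonneg hγ0 hc0]
    exact MGaux.sup_fixed_ge hP hγ0 hγ1 hπ1d hπG2 (hVal π1d πG2 hπ1d hπG2) hWge
  -- assemble
  intro s a1 a2
  have hdiff : ∀ s', |Vst s' - Vd s'| ≤ c := by
    intro s'
    rw [abs_le]
    constructor
    · linarith [hVdLe s']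
    · linarith [hVstLeVd s', hc0]
  have hterm2 : |Qf R P γ Vst s a1 a2 - Qf R P γ Vd s a1 a2| ≤ γ * c :=
    MGaux.Qf_abs_diff_le hP hγ0 hdiff s a1 a2
  have htri : |Qf (RA R φ w) (PA P φ w) γ VA (φ s) a1 a2 - Qf R P γ Vd s a1 a2|
      ≤ (γ * E + ε) + γ * c :=
    le_trans (abs_sub_le _ (Qf R P γ Vst s a1 a2) _)
      (add_le_add (hErec s a1 a2) hterm2)
  have hnum : (γ * E + ε) + γ * c ≤ 3 * ε / (1 - γ) ^ 2 := by
    rw [le_div_iff₀ (by positivity : (0:ℝ) < (1 - γ) ^ 2)]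
    have p1 : γ * E * (1 - γ) ^ 2 ≤ γ * ε * (1 - γ) := by nlinarith [mul_nonneg hγ0 h1γ.le]
    have p2 : ε * (1 - γ) ^ 2 ≤ ε := by
      nlinarith [mul_nonneg (mul_nonneg hε hγ0) (by linarith : (0:ℝ) ≤ 2 - γ)]
    have p3 : γ * c * (1 - γ) ^ 2 = 2 * γ * E * (1 - γ) := by
      have : γ * c * (1 - γ) ^ 2 = γ * (c * (1 - γ)) * (1 - γ) := by ring
      rw [this, hc2]; ring
    have p4 : 2 * γ * E * (1 - γ) ≤ 2 * γ * ε := by nlinarith [mul_nonneg hγ0 hγ0]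
    nlinarith [mul_nonneg hε hγ0, mul_nonneg (mul_nonneg hε hγ0) hγ0]
  exact le_trans htri hnum
end

section
/- Let A be a finite nonempty set, let γ ∈ [0,1), let Q1, Q2 : A → ℝ with |Q1(a)| ≤ 1/(1−γ) and |Q2(a)| ≤ 1/(1−γ) for all a ∈ A, and let ε ≥ 0, k ≥ 0. Assume that for every a ∈ A, |e^{Q1(a)}/Σ_{b∈A} e^{Q1(b)} − e^{Q2(a)}/Σ_{b∈A} e^{Q2(b)}| ≤ ε, and that |Σ_{b∈A} e^{Q1(b)} − Σ_{b∈A} e^{Q2(b)}| ≤ k·ε. Then for every a ∈ A, |Q1(a) − Q2(a)| ≤ e^{2/(1−γ)} · (|A| + k·e^{1/(1−γ)}/|A|) · ε, where |A| is the cardinality of A. -/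
open Finset

lemma exp_lip_lower (x y : ℝ) (h : x ≤ y) :
    Real.exp x * (y - x) ≤ Real.exp y - Real.exp x := by
  have h1 : Real.exp y = Real.exp x * Real.exp (y - x) := by
    rw [← Real.exp_add]; ring_nf
  nlinarith [Real.add_one_le_exp (y - x), Real.exp_pos x]

lemma exp_mul_abs_le (m x y : ℝ) (hx : m ≤ x) (hy : m ≤ y) :
    Real.exp m * |x - y| ≤ |Real.exp x - Real.exp y| := by
  rcases le_total x y with h | h
  · rw [abs_of_nonpos (by linarith), abs_of_nonpos (sub_nonpos.mpr (Real.exp_le_exp.mpr h))]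
    have h1 := exp_lip_lower x y h
    have h2 : Real.exp m ≤ Real.exp x := Real.exp_le_exp.mpr hx
    nlinarith [Real.exp_pos m]
  · rw [abs_of_nonneg (by linarith), abs_of_nonneg (sub_nonneg.mpr (Real.exp_le_exp.mpr h))]
    have h1 := exp_lip_lower y x h
    have h2 : Real.exp m ≤ Real.exp y := Real.exp_le_exp.mpr hy
    nlinarith [Real.exp_pos m]

theorem boltzmann_similarity_Q_bound
    {A : Type*} [Fintype A] [Nonempty A]
    (γ : ℝ) (hγ0 : 0 ≤ γ) (hγ1 : γ < 1)
    (Q1 Q2 : A → ℝ)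
    (hQ1 : ∀ a : A, |Q1 a| ≤ 1 / (1 - γ)) (hQ2 : ∀ a : A, |Q2 a| ≤ 1 / (1 - γ))
    (ε k : ℝ) (hε : 0 ≤ ε) (hk : 0 ≤ k)
    (h1 : ∀ a : A,
      |Real.exp (Q1 a) / (∑ b, Real.exp (Q1 b)) - Real.exp (Q2 a) / (∑ b, Real.exp (Q2 b))| ≤ ε)
    (h2 : |(∑ b, Real.exp (Q1 b)) - (∑ b, Real.exp (Q2 b))| ≤ k * ε) :
    ∀ a : A,
      |Q1 a - Q2 a|
        ≤ Real.exp (2 / (1 - γ)) *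
            ((Fintype.card A : ℝ) + k * Real.exp (1 / (1 - γ)) / (Fintype.card A : ℝ)) * ε := by
  intro a
  have hγ : (0:ℝ) < 1 - γ := by linarith
  set M : ℝ := 1 / (1 - γ) with hMdef
  have hMpos : 0 < M := by positivity
  set S1 : ℝ := ∑ b, Real.exp (Q1 b) with hS1def
  set S2 : ℝ := ∑ b, Real.exp (Q2 b) with hS2def
  set n : ℝ := (Fintype.card A : ℝ) with hndef
  have hn1 : (1:ℝ) ≤ n := by
    have h : 1 ≤ Fintype.card A := Fintype.card_pos
    rw [hndef]; exact_mod_cast h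
  have hnpos : 0 < n := by linarith
  have hS1pos : 0 < S1 := Finset.sum_pos (fun b _ => Real.exp_pos _) univ_nonempty
  have hS2pos : 0 < S2 := Finset.sum_pos (fun b _ => Real.exp_pos _) univ_nonempty
  -- bounds on sums
  have hS1ub : S1 ≤ n * Real.exp M := by
    rw [hS1def, hndef]
    calc ∑ b, Real.exp (Q1 b) ≤ ∑ _b : A, Real.exp M :=
        Finset.sum_le_sum fun b _ => Real.exp_le_exp.mpr (abs_le.mp (hQ1 b)).2
      _ = (Fintype.card A : ℝ) * Real.exp M := by
        rw [Finset.sum_const, Finset.card_univ, nsmul_eq_mul]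
  have hS2lb : n * Real.exp (-M) ≤ S2 := by
    have hterm : ∀ b : A, Real.exp (-M) ≤ Real.exp (Q2 b) := fun b =>
      Real.exp_le_exp.mpr (by have := (abs_le.mp (hQ2 b)).1; linarith)
    have hsum : ∑ _b : A, Real.exp (-M) ≤ ∑ b, Real.exp (Q2 b) :=
      Finset.sum_le_sum fun b _ => hterm b
    simpa [Finset.sum_const, Finset.card_univ, nsmul_eq_mul, hndef, hS2def] using hsum
  -- pointwise ratio bound
  have hratio : Real.exp (Q2 a) / S2 ≤ Real.exp M * Real.exp M / n := by
    have h1' : Real.exp (Q2 a) ≤ Real.exp M := Real.exp_le_exp.mpr (abs_le.mp (hQ2 a)).2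
    have h2' : n * Real.exp (-M) ≤ S2 := hS2lb
    have hinv : Real.exp (Q2 a) / S2 ≤ Real.exp M / (n * Real.exp (-M)) :=
      div_le_div₀ (Real.exp_pos M).le h1' (by positivity) h2'
    calc Real.exp (Q2 a) / S2 ≤ Real.exp M / (n * Real.exp (-M)) := hinv
      _ = Real.exp M * Real.exp M / n := by
        rw [Real.exp_neg]; field_simp
  -- bound on |exp Q1 a - exp Q2 a|
  have heq : Real.exp (Q1 a) - Real.exp (Q2 a)
      = (Real.exp (Q1 a) / S1 - Real.exp (Q2 a) / S2) * S1
        + (Real.exp (Q2 a) / S2) * (S1 - S2) := by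
    field_simp
    ring
  have hexpbound : |Real.exp (Q1 a) - Real.exp (Q2 a)|
      ≤ ε * (n * Real.exp M) + (Real.exp M * Real.exp M / n) * (k * ε) := by
    rw [heq]
    calc |(Real.exp (Q1 a) / S1 - Real.exp (Q2 a) / S2) * S1
          + (Real.exp (Q2 a) / S2) * (S1 - S2)|
        ≤ |(Real.exp (Q1 a) / S1 - Real.exp (Q2 a) / S2) * S1|
          + |(Real.exp (Q2 a) / S2) * (S1 - S2)| := abs_add_le _ _
      _ = |Real.exp (Q1 a) / S1 - Real.exp (Q2 a) / S2| * S1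
          + (Real.exp (Q2 a) / S2) * |S1 - S2| := by
          rw [abs_mul, abs_mul, abs_of_pos hS1pos,
            abs_of_pos (div_pos (Real.exp_pos _) hS2pos)]
      _ ≤ ε * (n * Real.exp M) + (Real.exp M * Real.exp M / n) * (k * ε) := by
          apply add_le_add
          · apply mul_le_mul (h1 a) hS1ub hS1pos.le hε
          · apply mul_le_mul hratio h2 (abs_nonneg _)
            positivity
  -- from exp bound to Q bound
  have hkey := exp_mul_abs_le (-M) (Q1 a) (Q2 a)
    (by have := (abs_le.mp (hQ1 a)).1; linarith)
    (by have := (abs_le.mp (hQ2 a)).1; linarith)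
  have hfinal : |Q1 a - Q2 a| ≤ Real.exp M * |Real.exp (Q1 a) - Real.exp (Q2 a)| := by
    have hE : Real.exp (-M) * Real.exp M = 1 := by
      rw [← Real.exp_add]; simp
    nlinarith [Real.exp_pos M, abs_nonneg (Q1 a - Q2 a)]
  have h2M : Real.exp (2 / (1 - γ)) = Real.exp M * Real.exp M := by
    rw [← Real.exp_add, hMdef]; ring_nf
  calc |Q1 a - Q2 a| ≤ Real.exp M * |Real.exp (Q1 a) - Real.exp (Q2 a)| := hfinal
    _ ≤ Real.exp M * (ε * (n * Real.exp M) + (Real.exp M * Real.exp M / n) * (k * ε)) := by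
        apply mul_le_mul_of_nonneg_left hexpbound (Real.exp_pos M).le
    _ = Real.exp (2 / (1 - γ)) * (n + k * Real.exp M / n) * ε := by
        rw [h2M]; field_simp
end

section
/- Let A be a finite nonempty set, let γ ∈ [0,1), let δ > 0, and let Q1, Q2 : A → ℝ with 0 ≤ Q1(a) ≤ 1/(1−γ) and 0 ≤ Q2(a) ≤ 1/(1−γ) for all a ∈ A, and with |Σ_{b∈A} Q1(b)| ≥ δ and |Σ_{b∈A} Q2(b)| ≥ δ. Let ε ≥ 0 and k ≥ 0, and assume that for every a ∈ A, |Q1(a)/Σ_{b∈A} Q1(b) − Q2(a)/Σ_{b∈A} Q2(b)| ≤ ε, and that |Σ_{b∈A} Q1(b) − Σ_{b∈A} Q2(b)| ≤ k·ε. Then for every a ∈ A, |Q1(a) − Q2(a)| ≤ (1/(1−γ)) · (|A| + k/δ) · ε, where |A| is the cardinality of A. -/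
open Finset

theorem multinomial_similarity_Q_bound
    {A : Type*} [Fintype A] [Nonempty A]
    (γ : ℝ) (hγ0 : 0 ≤ γ) (hγ1 : γ < 1) (δ : ℝ) (hδ : 0 < δ)
    (Q1 Q2 : A → ℝ)
    (hQ1 : ∀ a : A, 0 ≤ Q1 a ∧ Q1 a ≤ 1 / (1 - γ))
    (hQ2 : ∀ a : A, 0 ≤ Q2 a ∧ Q2 a ≤ 1 / (1 - γ))
    (hS1 : δ ≤ |∑ b, Q1 b|) (hS2 : δ ≤ |∑ b, Q2 b|)
    (ε k : ℝ) (hε : 0 ≤ ε) (hk : 0 ≤ k)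
    (h1 : ∀ a : A, |Q1 a / (∑ b, Q1 b) - Q2 a / (∑ b, Q2 b)| ≤ ε)
    (h2 : |(∑ b, Q1 b) - (∑ b, Q2 b)| ≤ k * ε) :
    ∀ a : A,
      |Q1 a - Q2 a| ≤ (1 / (1 - γ)) * ((Fintype.card A : ℝ) + k / δ) * ε := by
  intro a
  set S1 := ∑ b, Q1 b with hS1def
  set S2 := ∑ b, Q2 b with hS2def
  have hS1nn : 0 ≤ S1 := Finset.sum_nonneg fun b _ => (hQ1 b).1
  have hS2nn : 0 ≤ S2 := Finset.sum_nonneg fun b _ => (hQ2 b).1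
  have hS1' : δ ≤ S1 := by rwa [abs_of_nonneg hS1nn] at hS1
  have hS2' : δ ≤ S2 := by rwa [abs_of_nonneg hS2nn] at hS2
  have hS1pos : 0 < S1 := lt_of_lt_of_le hδ hS1'
  have hS2pos : 0 < S2 := lt_of_lt_of_le hδ hS2'
  have h1γ : 0 < 1 - γ := by linarith
  have key : Q1 a - Q2 a = S1 * (Q1 a / S1 - Q2 a / S2) + (Q2 a / S2) * (S1 - S2) := by
    field_simp
    ring
  have hdivnn : 0 ≤ Q2 a / S2 := div_nonneg (hQ2 a).1 hS2nn
  have hb1 : |S1 * (Q1 a / S1 - Q2 a / S2)| ≤ S1 * ε := by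
    rw [abs_mul, abs_of_nonneg hS1nn]
    exact mul_le_mul_of_nonneg_left (h1 a) hS1nn
  have hb2 : |(Q2 a / S2) * (S1 - S2)| ≤ (Q2 a / S2) * (k * ε) := by
    rw [abs_mul, abs_of_nonneg hdivnn]
    exact mul_le_mul_of_nonneg_left h2 hdivnn
  have hS1bound : S1 ≤ (Fintype.card A : ℝ) * (1 / (1 - γ)) := by
    calc S1 ≤ ∑ _b : A, 1 / (1 - γ) := Finset.sum_le_sum fun b _ => (hQ1 b).2
    _ = (Fintype.card A : ℝ) * (1 / (1 - γ)) := by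
        rw [Finset.sum_const, nsmul_eq_mul, Finset.card_univ]
  have hQdiv : Q2 a / S2 ≤ (1 / (1 - γ)) / δ := by
    apply div_le_div₀ (by positivity) (hQ2 a).2 hδ hS2'
  calc |Q1 a - Q2 a| ≤ S1 * ε + (Q2 a / S2) * (k * ε) := by
        rw [key]; exact (abs_add_le _ _).trans (add_le_add hb1 hb2)
  _ ≤ (Fintype.card A : ℝ) * (1 / (1 - γ)) * ε + (1 / (1 - γ)) / δ * (k * ε) := by
        apply add_le_add
        · exact mul_le_mul_of_nonneg_right hS1bound hε
        · exact mul_le_mul_of_nonneg_right hQdiv (by positivity)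
  _ = (1 / (1 - γ)) * ((Fintype.card A : ℝ) + k / δ) * ε := by
        field_simp
end

section
/- Let A be a finite nonempty set, let Q1, Q2 : A → ℝ with Q1(a) ≥ 0 and Q2(a) ≥ 0 for all a ∈ A and with Σ_{b∈A} Q1(b) > 0 and Σ_{b∈A} Q2(b) > 0, and let ε ≥ 0, k ≥ 0. Assume that for every a ∈ A, |Q1(a)/Σ_{b∈A} Q1(b) − Q2(a)/Σ_{b∈A} Q2(b)| ≤ ε, and that |Σ_{b∈A} Q1(b) − Σ_{b∈A} Q2(b)| ≤ k·ε. Then for every a ∈ A, |Q1(a) − Q2(a)| ≤ ε · (Σ_{b∈A} Q2(b) + k · Q1(a) / Σ_{b∈A} Q1(b)). -/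
open Finset

theorem multinomial_similarity_intermediate_bound
    {A : Type*} [Fintype A] [Nonempty A]
    (Q1 Q2 : A → ℝ)
    (hQ1 : ∀ a : A, 0 ≤ Q1 a) (hQ2 : ∀ a : A, 0 ≤ Q2 a)
    (hS1 : 0 < ∑ b, Q1 b) (hS2 : 0 < ∑ b, Q2 b)
    (ε k : ℝ) (hε : 0 ≤ ε) (hk : 0 ≤ k)
    (h1 : ∀ a : A, |Q1 a / (∑ b, Q1 b) - Q2 a / (∑ b, Q2 b)| ≤ ε)
    (h2 : |(∑ b, Q1 b) - (∑ b, Q2 b)| ≤ k * ε) :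
    ∀ a : A,
      |Q1 a - Q2 a| ≤ ε * ((∑ b, Q2 b) + k * Q1 a / (∑ b, Q1 b)) := by
  intro a
  set S1 := ∑ b, Q1 b
  set S2 := ∑ b, Q2 b
  have key : Q1 a - Q2 a = S2 * (Q1 a / S1 - Q2 a / S2) + Q1 a / S1 * (S1 - S2) := by
    field_simp
    ring
  have hr : 0 ≤ Q1 a / S1 := div_nonneg (hQ1 a) hS1.le
  calc |Q1 a - Q2 a| = |S2 * (Q1 a / S1 - Q2 a / S2) + Q1 a / S1 * (S1 - S2)| := by rw [key]
    _ ≤ |S2 * (Q1 a / S1 - Q2 a / S2)| + |Q1 a / S1 * (S1 - S2)| := abs_add_le _ _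
    _ = S2 * |Q1 a / S1 - Q2 a / S2| + Q1 a / S1 * |S1 - S2| := by
        rw [abs_mul, abs_mul, abs_of_nonneg hS2.le, abs_of_nonneg hr]
    _ ≤ S2 * ε + Q1 a / S1 * (k * ε) := by
        gcongr
        · exact h1 a
    _ = ε * (S2 + k * Q1 a / S1) := by ring
end
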